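/- arXiv:1512.01968 — 4 statements merged into one kernel-verified Lean document; each statement's English description precedes it below -/
import Mathlib

section
/- Let f : X × Y → {0,1} on finite sets X, Y, let μ be a product distribution on X × Y, let δ ∈ (0,1) and D > 0, and let (w_R) be nonnegative weights on rectangles with Σ_R w_R ≤ D satisfying the packing constraints Σ_{R∋(x,y)} w_R ≤ δ for all (x,y) ∈ f^{-1}(0) and Σ_{R∋(x,y)} w_R ≤ 1 for all (x,y). Let X = X_0 ⊎ X_1 and Y = Y_0 ⊎ Y_1 be partitions, set R^{(ij)} = X_i × Y_j, and suppose R^{(00)} is (1−√δ)-biased towards 0 (i.e., μ_1(R^{(00)}) ≤ √δ·μ_0(R^{(00)})) and that all four rectangles R^{(ij)} have positive μ-measure. For i,j ∈ {0,1} define ε^{(ij)} = 1 − (Σ_{(x,y)∈f^{-1}(1)∩R^{(ij)}} μ(x,y) Σ_{R∋(x,y)} w_R)/μ_1(R^{(ij)}). Then there exists (ij) ∈ {(0,1),(1,0)} such that at least one of the following holds: (a) 2·μ_1(R^{(ij)}) ≤ μ_0(R^{(ij)}); or (b) srec^{1,μ^{(ij)}}_{ε^{(ij)}+30·δ^{1/4},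 δ}(f) ≤ 0.9·D, where μ^{(ij)} is the restriction of μ to R^{(ij)}. -/
open scoped BigOperators
open scoped Classical

noncomputable section

/-! ## Probability distributions on finite types -/

/-- `p` is a probability distribution on the finite type `α`. -/
def IsDist {α : Type} [Fintype α] (p : α → ℝ) : Prop :=
  (∀ a, 0 ≤ p a) ∧ ∑ a, p a = 1

/-- `μ` (in curried form) is a probability distribution on `X × Y`. -/
def IsDist2 {X Y : Type} [Fintype X] [Fintype Y] (μ : X → Y → ℝ) : Prop :=
  (∀ x y, 0 ≤ μ x y) ∧ ∑ x, ∑ y, μ x y = 1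

/-! ## Deterministic communication protocols -/

/-- A deterministic two-party communication protocol: a finite binary tree where each
internal node is owned by Alice (`nodeA`) or Bob (`nodeB`) and is labeled by a function
of that player's input choosing one of the two children; leaves carry Boolean outputs. -/
inductive Protocol (X Y : Type) : Type
  | leaf : Bool → Protocol X Y
  | nodeA : (X → Bool) → Protocol X Y → Protocol X Y → Protocol X Y
  | nodeB : (Y → Bool) → Protocol X Y → Protocol X Y → Protocol X Y

namespace Protocol

def eval {X Y : Type} : Protocol X Y → X → Y → Bool
  | leaf b, _, _ => b
  | nodeA g t0 t1, x, y => if g x then eval t1 x y else eval t0 x y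
  | nodeB g t0 t1, x, y => if g y then eval t1 x y else eval t0 x y

/-- Depth (number of bits communicated in the worst case). -/
def depth {X Y : Type} : Protocol X Y → ℕ
  | leaf _ => 0
  | nodeA _ t0 t1 => max (depth t0) (depth t1) + 1
  | nodeB _ t0 t1 => max (depth t0) (depth t1) + 1

/-- Number of leaves. -/
def leavesCount {X Y : Type} : Protocol X Y → ℕ
  | leaf _ => 1
  | nodeA _ t0 t1 => leavesCount t0 + leavesCount t1
  | nodeB _ t0 t1 => leavesCount t0 + leavesCount t1

/-- The sequence of bits communicated on input `(x, y)`. -/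
def transcript {X Y : Type} : Protocol X Y → X → Y → List Bool
  | leaf _, _, _ => []
  | nodeA g t0 t1, x, y =>
      if g x then true :: transcript t1 x y else false :: transcript t0 x y
  | nodeB g t0 t1, x, y =>
      if g y then true :: transcript t1 x y else false :: transcript t0 x y

end Protocol

/-- Error of a deterministic protocol w.r.t. input distribution `μ`. -/
def commErr {X Y : Type} [Fintype X] [Fintype Y]
    (μ : X → Y → ℝ) (f : X → Y → Bool) (P : Protocol X Y) : ℝ :=
  ∑ x, ∑ y, if P.eval x y ≠ f x y then μ x y else 0

/-- Distributional communication complexity `CC^μ_ε(f)`: the minimum depth of a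
deterministic protocol erring with probability at most `ε` under `μ`. -/
def CCdist {X Y : Type} [Fintype X] [Fintype Y]
    (μ : X → Y → ℝ) (f : X → Y → Bool) (ε : ℝ) : ℕ :=
  sInf {d : ℕ | ∃ P : Protocol X Y, P.depth ≤ d ∧ commErr μ f P ≤ ε}

/-- The advantage `adv_μ(Π)` of a protocol w.r.t. a (not necessarily normalized) measure. -/
def protAdv {X Y : Type} [Fintype X] [Fintype Y]
    (μ : X → Y → ℝ) (f : X → Y → Bool) (P : Protocol X Y) : ℝ :=
  ∑ x, ∑ y, if P.eval x y = f x y then μ x y else - μ x y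

/-! ## Information complexity -/

/-- Probability of an event under a finite (possibly unnormalized) distribution. -/
def prOf {Ω : Type} [Fintype Ω] (p : Ω → ℝ) (q : Ω → Prop) : ℝ :=
  ∑ ω, if q ω then p ω else 0

/-- Conditional mutual information `I(A ; B | C)` (in bits) of random variables `A`, `B`, `C`
defined on a finite probability space `(Ω, p)`. -/
def condMI {Ω α β γ : Type} [Fintype Ω] (p : Ω → ℝ)
    (A : Ω → α) (B : Ω → β) (C : Ω → γ) : ℝ :=
  ∑ ω, p ω * Real.logb 2 (
    (prOf p (fun ω' => A ω' = A ω ∧ B ω' = B ω ∧ C ω' = C ω) *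
      prOf p (fun ω' => C ω' = C ω)) /
    (prOf p (fun ω' => A ω' = A ω ∧ C ω' = C ω) *
      prOf p (fun ω' => B ω' = B ω ∧ C ω' = C ω)))

/-- Internal information cost `IC^μ(Π) = I(X;T|Y) + I(Y;T|X)` of the public-coin protocol
given by a distribution `ρ` on `Fin m` together with deterministic protocols `P r`; the
transcript `T` consists of the public randomness together with the communicated bits. -/
def infoCost {X Y : Type} [Fintype X] [Fintype Y] (μ : X → Y → ℝ)
    {m : ℕ} (ρ : Fin m → ℝ) (P : Fin m → Protocol X Y) : ℝ :=
  condMI (fun ω : X × Y × Fin m => μ ω.1 ω.2.1 * ρ ω.2.2)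
      (fun ω => ω.1)
      (fun ω => (ω.2.2, (P ω.2.2).transcript ω.1 ω.2.1))
      (fun ω => ω.2.1)
  + condMI (fun ω : X × Y × Fin m => μ ω.1 ω.2.1 * ρ ω.2.2)
      (fun ω => ω.2.1)
      (fun ω => (ω.2.2, (P ω.2.2).transcript ω.1 ω.2.1))
      (fun ω => ω.1)

/-- Error of a public-coin protocol under input distribution `μ` and coin distribution `ρ`. -/
def randErr {X Y : Type} [Fintype X] [Fintype Y] (μ : X → Y → ℝ) (f : X → Y → Bool)
    {m : ℕ} (ρ : Fin m → ℝ) (P : Fin m → Protocol X Y) : ℝ :=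
  ∑ x, ∑ y, ∑ r, if (P r).eval x y ≠ f x y then μ x y * ρ r else 0

/-- `IC^μ_ε(f)`: infimum of the information cost over all public-coin protocols computing
`f` with error at most `ε` under `μ`. -/
def ICmu {X Y : Type} [Fintype X] [Fintype Y]
    (μ : X → Y → ℝ) (f : X → Y → Bool) (ε : ℝ) : ℝ :=
  sInf { c : ℝ | ∃ (m : ℕ) (ρ : Fin m → ℝ) (P : Fin m → Protocol X Y),
    IsDist ρ ∧ randErr μ f ρ P ≤ ε ∧ c = infoCost μ ρ P }

/-- `IC_ε(f) = max_μ IC^μ_ε(f)`. -/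
def IC {X Y : Type} [Fintype X] [Fintype Y] (f : X → Y → Bool) (ε : ℝ) : ℝ :=
  sSup { c : ℝ | ∃ μ : X → Y → ℝ, IsDist2 μ ∧ c = ICmu μ f ε }

/-! ## Rectangles, smooth rectangle bound and partition bound -/

/-- Total weight of rectangles containing `(x, y)`: a combinatorial rectangle is a pair
`R = (S, T)` of finite sets, and `(x,y) ∈ R` iff `x ∈ S ∧ y ∈ T`. -/
def rcov {X Y : Type} [Fintype X] [Fintype Y]
    (w : Finset X × Finset Y → ℝ) (x : X) (y : Y) : ℝ :=
  ∑ R : Finset X × Finset Y, if x ∈ R.1 ∧ y ∈ R.2 then w R else 0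

/-- `μ(R)` for a rectangle `R`. -/
def rMass {X Y : Type} [Fintype X] [Fintype Y]
    (μ : X → Y → ℝ) (R : Finset X × Finset Y) : ℝ :=
  ∑ x, ∑ y, if x ∈ R.1 ∧ y ∈ R.2 then μ x y else 0

/-- `μ_z(R) = μ(R ∩ f⁻¹(z))` for a rectangle `R`. -/
def rMassZ {X Y : Type} [Fintype X] [Fintype Y]
    (μ : X → Y → ℝ) (f : X → Y → Bool) (z : Bool) (R : Finset X × Finset Y) : ℝ :=
  ∑ x, ∑ y, if (x ∈ R.1 ∧ y ∈ R.2) ∧ f x y = z then μ x y else 0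

/-- `μ_z = μ(f⁻¹(z))`. -/
def totalZ {X Y : Type} [Fintype X] [Fintype Y]
    (μ : X → Y → ℝ) (f : X → Y → Bool) (z : Bool) : ℝ :=
  ∑ x, ∑ y, if f x y = z then μ x y else 0

/-- `|μ|`, the total mass of a measure. -/
def totalMass {X Y : Type} [Fintype X] [Fintype Y] (μ : X → Y → ℝ) : ℝ :=
  ∑ x, ∑ y, μ x y

/-- Restriction of a measure to a rectangle. -/
def restrictRect {X Y : Type} (μ : X → Y → ℝ) (R : Finset X × Finset Y) : X → Y → ℝ :=
  fun x y => if x ∈ R.1 ∧ y ∈ R.2 then μ x y else 0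

/-- Distributional smooth rectangle bound `srec^{z,μ}_{ε,δ}(f)` (LP optimal value). -/
def srecZmu {X Y : Type} [Fintype X] [Fintype Y]
    (μ : X → Y → ℝ) (f : X → Y → Bool) (z : Bool) (ε δ : ℝ) : ℝ :=
  sInf { v : ℝ | ∃ w : Finset X × Finset Y → ℝ,
    (∀ R, 0 ≤ w R) ∧
    ((1 - ε) * totalZ μ f z ≤ ∑ x, ∑ y, if f x y = z then μ x y * rcov w x y else 0) ∧
    (∀ x y, f x y ≠ z → rcov w x y ≤ δ) ∧
    (∀ x y, rcov w x y ≤ 1) ∧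
    v = ∑ R : Finset X × Finset Y, w R }

/-- `srec^μ_{ε,δ}(f) = max{srec^{0,μ}_{ε,δ}(f), srec^{1,μ}_{ε,δ}(f)}`. -/
def srecMu {X Y : Type} [Fintype X] [Fintype Y]
    (μ : X → Y → ℝ) (f : X → Y → Bool) (ε δ : ℝ) : ℝ :=
  max (srecZmu μ f false ε δ) (srecZmu μ f true ε δ)

/-- Smooth rectangle bound `srec^z_{ε,δ}(f)` (LP optimal value). -/
def srecZ {X Y : Type} [Fintype X] [Fintype Y]
    (f : X → Y → Bool) (z : Bool) (ε δ : ℝ) : ℝ :=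
  sInf { v : ℝ | ∃ w : Finset X × Finset Y → ℝ,
    (∀ R, 0 ≤ w R) ∧
    (∀ x y, f x y = z → 1 - ε ≤ rcov w x y) ∧
    (∀ x y, f x y ≠ z → rcov w x y ≤ δ) ∧
    (∀ x y, rcov w x y ≤ 1) ∧
    v = ∑ R : Finset X × Finset Y, w R }

/-- `srec_{ε,δ}(f) = max{srec^0_{ε,δ}(f), srec^1_{ε,δ}(f)}`. -/
def srec {X Y : Type} [Fintype X] [Fintype Y] (f : X → Y → Bool) (ε δ : ℝ) : ℝ :=
  max (srecZ f false ε δ) (srecZ f true ε δ)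

/-- Partition bound `prt_ε(f)` (LP optimal value). -/
def prt {X Y : Type} [Fintype X] [Fintype Y] (f : X → Y → Bool) (ε : ℝ) : ℝ :=
  sInf { v : ℝ | ∃ w : Bool → Finset X × Finset Y → ℝ,
    (∀ z R, 0 ≤ w z R) ∧
    (∀ x y, 1 - ε ≤ rcov (w (f x y)) x y) ∧
    (∀ x y, rcov (w false) x y + rcov (w true) x y = 1) ∧
    v = ∑ R : Finset X × Finset Y, (w false R + w true R) }

/-! ### General-output versions -/

/-- Smooth rectangle bound `srec^z_{ε,δ}(f)` for general output alphabet. -/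
def srecZgen {X Y Z : Type} [Fintype X] [Fintype Y]
    (f : X → Y → Z) (z : Z) (ε δ : ℝ) : ℝ :=
  sInf { v : ℝ | ∃ w : Finset X × Finset Y → ℝ,
    (∀ R, 0 ≤ w R) ∧
    (∀ x y, f x y = z → 1 - ε ≤ rcov w x y) ∧
    (∀ x y, f x y ≠ z → rcov w x y ≤ δ) ∧
    (∀ x y, rcov w x y ≤ 1) ∧
    v = ∑ R : Finset X × Finset Y, w R }

/-- `srec_{ε,δ}(f) = max_{z ∈ Z} srec^z_{ε,δ}(f)`. -/
def srecGen {X Y Z : Type} [Fintype X] [Fintype Y] [Fintype Z]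
    (f : X → Y → Z) (ε δ : ℝ) : ℝ :=
  sSup (Set.range fun z : Z => srecZgen f z ε δ)

/-- Distributional smooth rectangle bound for general output alphabet. -/
def srecZmuGen {X Y Z : Type} [Fintype X] [Fintype Y]
    (μ : X → Y → ℝ) (f : X → Y → Z) (z : Z) (ε δ : ℝ) : ℝ :=
  sInf { v : ℝ | ∃ w : Finset X × Finset Y → ℝ,
    (∀ R, 0 ≤ w R) ∧
    ((1 - ε) * (∑ x, ∑ y, if f x y = z then μ x y else 0) ≤
      ∑ x, ∑ y, if f x y = z then μ x y * rcov w x y else 0) ∧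
    (∀ x y, f x y ≠ z → rcov w x y ≤ δ) ∧
    (∀ x y, rcov w x y ≤ 1) ∧
    v = ∑ R : Finset X × Finset Y, w R }

/-- `srec^μ_{ε,δ}(f) = max_{z ∈ Z} srec^{z,μ}_{ε,δ}(f)`. -/
def srecMuGen {X Y Z : Type} [Fintype X] [Fintype Y] [Fintype Z]
    (μ : X → Y → ℝ) (f : X → Y → Z) (ε δ : ℝ) : ℝ :=
  sSup (Set.range fun z : Z => srecZmuGen μ f z ε δ)

/-- Partition bound for general output alphabet. -/
def prtGen {X Y Z : Type} [Fintype X] [Fintype Y] [Fintype Z]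
    (f : X → Y → Z) (ε : ℝ) : ℝ :=
  sInf { v : ℝ | ∃ w : Z → Finset X × Finset Y → ℝ,
    (∀ z R, 0 ≤ w z R) ∧
    (∀ x y, 1 - ε ≤ rcov (w (f x y)) x y) ∧
    (∀ x y, (∑ z : Z, rcov (w z) x y) = 1) ∧
    v = ∑ z : Z, ∑ R : Finset X × Finset Y, w z R }

/-! ## Decision trees, subcubes and the query partition bound -/

/-- Deterministic decision trees on `n` input bits. -/
inductive DTree (n : ℕ) : Type
  | leaf : Bool → DTree n
  | node : Fin n → DTree n → DTree n → DTree n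

def DTree.eval {n : ℕ} : DTree n → (Fin n → Bool) → Bool
  | .leaf b, _ => b
  | .node i t0 t1, x => if x i then DTree.eval t1 x else DTree.eval t0 x

def DTree.depth {n : ℕ} : DTree n → ℕ
  | .leaf _ => 0
  | .node _ t0 t1 => max (DTree.depth t0) (DTree.depth t1) + 1

/-- Error of a decision tree w.r.t. the input distribution `μ`. -/
def qErr {n : ℕ} (μ : (Fin n → Bool) → ℝ) (g : (Fin n → Bool) → Bool) (T : DTree n) : ℝ :=
  ∑ x, if T.eval x ≠ g x then μ x else 0

/-- Distributional query complexity `QC^μ_ε(g)`: minimum depth of a deterministic decision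
tree erring with probability at most `ε` under `μ`. -/
def QCdist {n : ℕ} (μ : (Fin n → Bool) → ℝ) (g : (Fin n → Bool) → Bool) (ε : ℝ) : ℕ :=
  sInf {d : ℕ | ∃ T : DTree n, T.depth ≤ d ∧ qErr μ g T ≤ ε}

/-- A subcube of `{0,1}ⁿ`, given by its support pattern `s ∈ {0,1,⋆}ⁿ`. -/
abbrev Subcube (n : ℕ) := Fin n → Option Bool

/-- Membership in a subcube. -/
def memCube {n : ℕ} (A : Subcube n) (x : Fin n → Bool) : Prop :=
  ∀ i, ∀ b, A i = some b → x i = b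

/-- Size of (the support of) a subcube. -/
def cubeSize {n : ℕ} (A : Subcube n) : ℕ :=
  (Finset.univ.filter fun i => (A i).isSome).card

/-- Total weight of subcubes containing `x`. -/
def cubeCov {n : ℕ} (w : Subcube n → ℝ) (x : Fin n → Bool) : ℝ :=
  ∑ A : Subcube n, if memCube A x then w A else 0

/-- Query partition bound `qprt_ε(g)` (LP optimal value). -/
def qprt {n : ℕ} (g : (Fin n → Bool) → Bool) (ε : ℝ) : ℝ :=
  sInf { v : ℝ | ∃ w : Bool → Subcube n → ℝ,
    (∀ z A, 0 ≤ w z A) ∧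
    (∀ x, 1 - ε ≤ cubeCov (w (g x)) x) ∧
    (∀ x, cubeCov (w false) x + cubeCov (w true) x = 1) ∧
    v = ∑ A : Subcube n, (w false A + w true A) * 2 ^ cubeSize A }

/-- The bit-wise product distribution on `{0,1}ⁿ` with `p_i(1) = p i`, `p_i(0) = 1 - p i`. -/
def bitProd {n : ℕ} (p : Fin n → ℝ) : (Fin n → Bool) → ℝ :=
  fun x => ∏ i, if x i then p i else 1 - p i

/-- `μ(A)` for a subcube (or any set given by a membership predicate). -/
def cubeMass {n : ℕ} (μ : (Fin n → Bool) → ℝ) (A : Subcube n) : ℝ :=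
  ∑ x, if memCube A x then μ x else 0

/-- `μ_z(A) = μ(A ∩ g⁻¹(z))` for a subcube `A`. -/
def cubeMassZ {n : ℕ} (μ : (Fin n → Bool) → ℝ) (g : (Fin n → Bool) → Bool)
    (z : Bool) (A : Subcube n) : ℝ :=
  ∑ x, if memCube A x ∧ g x = z then μ x else 0

/-- `μ_z = μ(g⁻¹(z))`. -/
def qTotalZ {n : ℕ} (μ : (Fin n → Bool) → ℝ) (g : (Fin n → Bool) → Bool) (z : Bool) : ℝ :=
  ∑ x, if g x = z then μ x else 0

/-- Mass of a finite set of pairs under the product measure `μA ⊗ μB`. -/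
def pairMass {X Y : Type} (μA : X → ℝ) (μB : Y → ℝ) (A : Finset (X × Y)) : ℝ :=
  ∑ q ∈ A, μA q.1 * μB q.2

end


section AuxLemmas

open Finset

variable {X Y : Type} [Fintype X] [Fintype Y]

lemma prod_split (μA : X → ℝ) (μB : Y → ℝ) (S : Finset X) (T : Finset Y) :
    (∑ x, ∑ y, if x ∈ S ∧ y ∈ T then μA x * μB y else 0)
      = (∑ x ∈ S, μA x) * (∑ y ∈ T, μB y) := by
  have h : ∀ x y, (if x ∈ S ∧ y ∈ T then μA x * μB y else 0)
      = (if x ∈ S then μA x else 0) * (if y ∈ T then μB y else 0) := by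
    intro x y; by_cases hx : x ∈ S <;> by_cases hy : y ∈ T <;> simp [hx, hy]
  simp only [h]
  rw [← Finset.sum_mul_sum]
  congr 1 <;> simp [Finset.sum_ite_mem]

lemma bridge (μA : X → ℝ) (μB : Y → ℝ) (S U : Finset X) (T V : Finset Y) :
    (∑ x, ∑ y, if (x ∈ S ∧ y ∈ T) ∧ (x ∈ U ∧ y ∈ V) then μA x * μB y else 0)
      = (∑ x ∈ S ∩ U, μA x) * (∑ y ∈ T ∩ V, μB y) := by
  rw [← prod_split]
  refine Finset.sum_congr rfl fun x _ => Finset.sum_congr rfl fun y _ => ?_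
  refine if_congr ?_ rfl rfl
  constructor
  · rintro ⟨⟨h1, h2⟩, h3, h4⟩; exact ⟨Finset.mem_inter.mpr ⟨h1, h3⟩, Finset.mem_inter.mpr ⟨h2, h4⟩⟩
  · rintro ⟨h1, h2⟩
    rcases Finset.mem_inter.mp h1 with ⟨ha, hb⟩
    rcases Finset.mem_inter.mp h2 with ⟨hc, hd⟩
    exact ⟨⟨ha, hc⟩, hb, hd⟩

lemma swap_sum (g : X → Y → ℝ) (w : Finset X × Finset Y → ℝ) (Q : X → Y → Prop)
    [∀ x y, Decidable (Q x y)] :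
    (∑ x, ∑ y, if Q x y then g x y * rcov w x y else 0)
      = ∑ R : Finset X × Finset Y, w R *
          ∑ x, ∑ y, (if (x ∈ R.1 ∧ y ∈ R.2) ∧ Q x y then g x y else 0) := by
  have h1 : ∀ x y, (if Q x y then g x y * rcov w x y else 0)
      = ∑ R : Finset X × Finset Y, (if (x ∈ R.1 ∧ y ∈ R.2) ∧ Q x y then w R * g x y else 0) := by
    intro x y
    by_cases hq : Q x y
    · rw [if_pos hq, rcov, Finset.mul_sum]
      refine Finset.sum_congr rfl fun R _ => ?_
      by_cases hm : x ∈ R.1 ∧ y ∈ R.2 <;> simp [hm, hq, mul_comm]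
    · rw [if_neg hq]
      symm; apply Finset.sum_eq_zero; intro R _; simp [hq]
  calc (∑ x, ∑ y, if Q x y then g x y * rcov w x y else 0)
      = ∑ x, ∑ y, ∑ R : Finset X × Finset Y,
          (if (x ∈ R.1 ∧ y ∈ R.2) ∧ Q x y then w R * g x y else 0) := by
        exact Finset.sum_congr rfl fun x _ => Finset.sum_congr rfl fun y _ => h1 x y
    _ = ∑ x, ∑ R : Finset X × Finset Y, ∑ y,
          (if (x ∈ R.1 ∧ y ∈ R.2) ∧ Q x y then w R * g x y else 0) := by
        exact Finset.sum_congr rfl fun x _ => Finset.sum_comm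
    _ = ∑ R : Finset X × Finset Y, ∑ x, ∑ y,
          (if (x ∈ R.1 ∧ y ∈ R.2) ∧ Q x y then w R * g x y else 0) := Finset.sum_comm
    _ = ∑ R : Finset X × Finset Y, w R *
          ∑ x, ∑ y, (if (x ∈ R.1 ∧ y ∈ R.2) ∧ Q x y then g x y else 0) := by
        refine Finset.sum_congr rfl fun R _ => ?_
        rw [Finset.mul_sum]
        refine Finset.sum_congr rfl fun x _ => ?_
        rw [Finset.mul_sum]
        refine Finset.sum_congr rfl fun y _ => ?_
        by_cases h : (x ∈ R.1 ∧ y ∈ R.2) ∧ Q x y <;> simp [h, mul_comm]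

lemma lossA {ι : Type*} [Fintype ι] (w al be de m1 : ι → ℝ) (K : ι → Prop) [DecidablePred K]
    (a b a' b' lam : ℝ) (ha : 0 < a) (hb : 0 < b) (ha' : 0 < a') (hb' : 0 < b')
    (hlam : 0 < lam)
    (hw : ∀ i, 0 ≤ w i) (hal : ∀ i, 0 ≤ al i) (hde : ∀ i, 0 ≤ de i)
    (hm0 : ∀ i, 0 ≤ m1 i) (hmb : ∀ i, m1 i ≤ be i)
    (hK : ∀ i, ¬ K i → lam * (be i * b) ≤ al i * b' ∨ be i * a' ≤ lam * (de i * a))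
    (hSal : ∑ i, w i * al i ≤ 2 * (lam * lam) * (a * b))
    (hSde : ∑ i, w i * de i ≤ a' * b') :
    ∑ i, (w i - (if K i then w i else 0)) * m1 i ≤ 3 * lam * (a * b') := by
  classical
  have key : ∀ i, (w i - (if K i then w i else 0)) * m1 i ≤
      (if lam * (be i * b) ≤ al i * b' then w i * m1 i else 0)
      + (if be i * a' ≤ lam * (de i * a) then w i * m1 i else 0) := by
    intro i
    have hwm : 0 ≤ w i * m1 i := mul_nonneg (hw i) (hm0 i)
    by_cases h : K i
    · simp only [if_pos h, sub_self, zero_mul]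
      split_ifs <;> linarith
    · rcases hK i h with hc | hc
      · rw [if_neg h, if_pos hc, sub_zero]
        split_ifs <;> linarith
      · rw [if_neg h, if_pos hc, sub_zero]
        split_ifs <;> linarith
  have h1 := Finset.sum_le_sum (fun i (_ : i ∈ Finset.univ) => key i)
  rw [Finset.sum_add_distrib] at h1
  -- first part
  have h2 : (lam * b) * ∑ i, (if lam * (be i * b) ≤ al i * b' then w i * m1 i else 0)
      ≤ b' * ∑ i, w i * al i := by
    rw [Finset.mul_sum, Finset.mul_sum]
    refine Finset.sum_le_sum fun i _ => ?_
    split_ifs with h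
    · have e2 : w i * m1 i ≤ w i * be i := mul_le_mul_of_nonneg_left (hmb i) (hw i)
      have e1 : w i * (lam * (be i * b)) ≤ w i * (al i * b') :=
        mul_le_mul_of_nonneg_left h (hw i)
      nlinarith [mul_le_mul_of_nonneg_left e2 (mul_nonneg hlam.le hb.le)]
    · have := mul_nonneg (hw i) (hal i); nlinarith
  have h2' : ∑ i, (if lam * (be i * b) ≤ al i * b' then w i * m1 i else 0)
      ≤ 2 * lam * (a * b') := by
    have hb2 : b' * ∑ i, w i * al i ≤ b' * (2 * (lam * lam) * (a * b)) :=
      mul_le_mul_of_nonneg_left hSal hb'.le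
    have hfin : (lam * b) * ∑ i, (if lam * (be i * b) ≤ al i * b' then w i * m1 i else 0)
        ≤ (lam * b) * (2 * lam * (a * b')) := by nlinarith
    exact le_of_mul_le_mul_left hfin (by positivity)
  -- second part
  have h3 : a' * ∑ i, (if be i * a' ≤ lam * (de i * a) then w i * m1 i else 0)
      ≤ (lam * a) * ∑ i, w i * de i := by
    rw [Finset.mul_sum, Finset.mul_sum]
    refine Finset.sum_le_sum fun i _ => ?_
    split_ifs with h
    · have e2 : w i * m1 i ≤ w i * be i := mul_le_mul_of_nonneg_left (hmb i) (hw i)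
      have e1 : w i * (be i * a') ≤ w i * (lam * (de i * a)) :=
        mul_le_mul_of_nonneg_left h (hw i)
      nlinarith [mul_le_mul_of_nonneg_left e2 ha'.le]
    · have := mul_nonneg (hw i) (hde i)
      have h5 : 0 ≤ lam * a * (w i * de i) := by positivity
      nlinarith
  have h3' : ∑ i, (if be i * a' ≤ lam * (de i * a) then w i * m1 i else 0)
      ≤ lam * (a * b') := by
    have hb3 : (lam * a) * ∑ i, w i * de i ≤ (lam * a) * (a' * b') :=
      mul_le_mul_of_nonneg_left hSde (by positivity)
    have hfin : a' * ∑ i, (if be i * a' ≤ lam * (de i * a) then w i * m1 i else 0)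
        ≤ a' * (lam * (a * b')) := by nlinarith
    exact le_of_mul_le_mul_left hfin ha'
  linarith

lemma keptB (al be ga de a b a' b' lam : ℝ)
    (ha : 0 < a) (hb : 0 < b) (ha' : 0 < a') (hb' : 0 < b')
    (hal : 0 ≤ al) (hde : 0 ≤ de) (hbe : 0 ≤ be) (hga : 0 ≤ ga)
    (hprod : be * ga = al * de)
    (h1 : al * b' < lam * (be * b)) (h2 : lam * (de * a) < be * a')
    (h3 : al * a' < lam * (ga * a)) (h4 : lam * (de * b) < ga * b') : False := by
  have hlam : 0 < lam := by
    by_contra hcon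
    push_neg at hcon
    nlinarith [mul_nonneg hal hb'.le, mul_nonneg (mul_nonneg hbe hb.le) (neg_nonneg.mpr hcon)]
  have hbe2 : 0 < be := by nlinarith [mul_nonneg hal hb'.le, mul_pos hlam hb]
  have hga2 : 0 < ga := by nlinarith [mul_nonneg (mul_nonneg hlam.le hde) hb.le, hb']
  have hprodpos : 0 < al * de := by rw [← hprod]; positivity
  have hal2 : 0 < al := by
    rcases (mul_pos_iff.mp hprodpos) with ⟨h, _⟩ | ⟨h, _⟩
    · exact h
    · linarith
  have hde2 : 0 < de := by
    rcases (mul_pos_iff.mp hprodpos) with ⟨_, h⟩ | ⟨_, h⟩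
    · exact h
    · linarith
  have t13 : al * (al * (a' * b')) < al * ((lam * lam) * ((a * b) * de)) := by
    calc al * (al * (a' * b')) = (al * a') * (al * b') := by ring
      _ < (lam * (ga * a)) * (lam * (be * b)) :=
          mul_lt_mul'' h3 h1 (by positivity) (by positivity)
      _ = (lam * lam) * ((a * b) * (be * ga)) := by ring
      _ = al * ((lam * lam) * ((a * b) * de)) := by rw [hprod]; ring
  have key1 : al * (a' * b') < (lam * lam) * ((a * b) * de) :=
    lt_of_mul_lt_mul_left t13 hal2.le
  have t24 : de * ((lam * lam) * ((a * b) * de)) < de * (al * (a' * b')) := by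
    calc de * ((lam * lam) * ((a * b) * de)) = (lam * (de * a)) * (lam * (de * b)) := by ring
      _ < (be * a') * (ga * b') := mul_lt_mul'' h2 h4 (by positivity) (by positivity)
      _ = (a' * b') * (be * ga) := by ring
      _ = de * (al * (a' * b')) := by rw [hprod]; ring
  have key2 : (lam * lam) * ((a * b) * de) < al * (a' * b') :=
    lt_of_mul_lt_mul_left t24 hde2.le
  exact absurd key1 (not_lt.mpr key2.le)

lemma side_feasible
    (f : X → Y → Bool) (μ : X → Y → ℝ) (hμ0 : ∀ x y, 0 ≤ μ x y)
    (δ lam : ℝ)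
    (w : Finset X × Finset Y → ℝ) (hw0 : ∀ R, 0 ≤ w R)
    (hpack : ∀ x y, f x y = false → rcov w x y ≤ δ)
    (hone : ∀ x y, rcov w x y ≤ 1)
    (U : Finset X) (V : Finset Y)
    (K : Finset X × Finset Y → Prop) [DecidablePred K]
    (hmass : 0 < rMassZ μ f true (U, V))
    (hloss : ∑ R : Finset X × Finset Y, (w R - (if K R then w R else 0)) *
        (∑ x, ∑ y, if (x ∈ R.1 ∧ y ∈ R.2) ∧ ((x ∈ U ∧ y ∈ V) ∧ f x y = true)
          then μ x y else 0)
      ≤ 30 * lam * rMassZ μ f true (U, V)) :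
    srecZmu (restrictRect μ (U, V)) f true
      ((1 - (∑ x, ∑ y, if (x ∈ U ∧ y ∈ V) ∧ f x y = true then μ x y * rcov w x y else 0) /
          rMassZ μ f true (U, V)) + 30 * lam) δ
      ≤ ∑ R : Finset X × Finset Y, (if K R then w R else 0) := by
  classical
  set M := rMassZ μ f true (U, V) with hM
  set m1 : Finset X × Finset Y → ℝ := fun R =>
    ∑ x, ∑ y, if (x ∈ R.1 ∧ y ∈ R.2) ∧ ((x ∈ U ∧ y ∈ V) ∧ f x y = true) then μ x y else 0
    with hm1
  set w' : Finset X × Finset Y → ℝ := fun R => if K R then w R else 0 with hw'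
  have hw'0 : ∀ R, 0 ≤ w' R := fun R => by
    rw [hw']; dsimp only; split_ifs with h
    · exact hw0 R
    · exact le_rfl
  have hrc : ∀ x y, rcov w' x y ≤ rcov w x y := by
    intro x y
    refine Finset.sum_le_sum fun R _ => ?_
    split_ifs with h
    · rw [hw']; dsimp only; split_ifs with h2
      · exact le_rfl
      · exact hw0 R
    · exact le_rfl
  apply csInf_le
  · refine ⟨0, fun v hv => ?_⟩
    obtain ⟨w2, hw2, -, -, -, hv⟩ := hv
    rw [hv]
    exact Finset.sum_nonneg fun R _ => hw2 R
  · refine ⟨w', hw'0, ?_, ?_, ?_, rfl⟩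
    · -- coverage constraint
      have hT : totalZ (restrictRect μ (U, V)) f true = M := by
        rw [hM]; unfold totalZ rMassZ restrictRect
        refine Finset.sum_congr rfl fun x _ => Finset.sum_congr rfl fun y _ => ?_
        by_cases h1 : f x y = true <;> by_cases h2 : x ∈ U ∧ y ∈ V <;> simp_all
      have hnum : (∑ x, ∑ y, if (x ∈ U ∧ y ∈ V) ∧ f x y = true
            then μ x y * rcov w x y else 0) = ∑ R : Finset X × Finset Y, w R * m1 R := by
        rw [swap_sum μ w (fun x y => (x ∈ U ∧ y ∈ V) ∧ f x y = true)]
      have hcov : (∑ x, ∑ y, if f x y = true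
            then restrictRect μ (U, V) x y * rcov w' x y else 0)
          = ∑ R : Finset X × Finset Y, w' R * m1 R := by
        rw [← swap_sum μ w' (fun x y => (x ∈ U ∧ y ∈ V) ∧ f x y = true)]
        refine Finset.sum_congr rfl fun x _ => Finset.sum_congr rfl fun y _ => ?_
        by_cases h1 : f x y = true <;> by_cases h2 : x ∈ U ∧ y ∈ V <;>
          simp [restrictRect, h1, h2]
      have hdec : ∑ R : Finset X × Finset Y, w R * m1 R
          = (∑ R : Finset X × Finset Y, w' R * m1 R)
            + ∑ R : Finset X × Finset Y, (w R - w' R) * m1 R := by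
        rw [← Finset.sum_add_distrib]
        refine Finset.sum_congr rfl fun R _ => by ring
      rw [hT, hcov, hnum]
      have hre : (1 - ((1 - (∑ R : Finset X × Finset Y, w R * m1 R) / M) + 30 * lam)) * M
          = (∑ R : Finset X × Finset Y, w R * m1 R) - 30 * lam * M := by
        have e : (1 - ((1 - (∑ R : Finset X × Finset Y, w R * m1 R) / M) + 30 * lam))
            = (∑ R : Finset X × Finset Y, w R * m1 R) / M - 30 * lam := by ring
        rw [e, sub_mul, div_mul_cancel₀ _ hmass.ne']
      rw [hre]
      have hloss' : ∑ R : Finset X × Finset Y, (w R - w' R) * m1 R ≤ 30 * lam * M := hloss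
      linarith [hdec, hloss']
    · intro x y hf
      have hfalse : f x y = false := by
        cases hfb : f x y
        · rfl
        · exact absurd hfb hf
      exact le_trans (hrc x y) (hpack x y hfalse)
    · intro x y
      exact le_trans (hrc x y) (hone x y)

end AuxLemmas

set_option maxHeartbeats 2000000 in
/-- **Lemma 2.5 (decomposition into subproblems).** Let `μ` be a product distribution,
`w` nonnegative weights on rectangles of total weight at most `D` satisfying the packing
constraints, `X = X₀ ⊎ X₁`, `Y = Y₀ ⊎ Y₁` partitions with `R⁽⁰⁰⁾ = X₀ × Y₀`
`(1-√δ)`-biased towards `0` and all `R⁽ⁱʲ⁾` of positive measure. Then for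
`(ij) ∈ {(0,1),(1,0)}` one of: (a) `2μ₁(R⁽ⁱʲ⁾) ≤ μ₀(R⁽ⁱʲ⁾)`, or (b)
`srec^{1,μ⁽ⁱʲ⁾}_{ε⁽ⁱʲ⁾+30δ^{1/4},δ}(f) ≤ 0.9·D`, where
`ε⁽ⁱʲ⁾ = 1 - (Σ_{(x,y)∈f⁻¹(1)∩R⁽ⁱʲ⁾} μ(x,y)·Σ_{R∋(x,y)} w_R)/μ₁(R⁽ⁱʲ⁾)` and `μ⁽ⁱʲ⁾` is
the restriction of `μ` to `R⁽ⁱʲ⁾`. -/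
theorem subproblem_decomposition {X Y : Type} [Fintype X] [Fintype Y]
    (f : X → Y → Bool) (μA : X → ℝ) (μB : Y → ℝ) (hA : IsDist μA) (hB : IsDist μB)
    (μ : X → Y → ℝ) (hμ : ∀ x y, μ x y = μA x * μB y)
    (δ D : ℝ) (hδ : δ ∈ Set.Ioo (0 : ℝ) 1) (hD : 0 < D)
    (w : Finset X × Finset Y → ℝ) (hw0 : ∀ R, 0 ≤ w R)
    (hwD : ∑ R : Finset X × Finset Y, w R ≤ D)
    (hpack : ∀ x y, f x y = false → rcov w x y ≤ δ)
    (hone : ∀ x y, rcov w x y ≤ 1)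
    (X0 X1 : Finset X) (Y0 Y1 : Finset Y)
    (hX : Disjoint X0 X1 ∧ X0 ∪ X1 = Finset.univ)
    (hY : Disjoint Y0 Y1 ∧ Y0 ∪ Y1 = Finset.univ)
    (hbias : rMassZ μ f true (X0, Y0) ≤ Real.sqrt δ * rMassZ μ f false (X0, Y0))
    (hpos00 : 0 < rMass μ (X0, Y0)) (hpos01 : 0 < rMass μ (X0, Y1))
    (hpos10 : 0 < rMass μ (X1, Y0)) (hpos11 : 0 < rMass μ (X1, Y1)) :
    (2 * rMassZ μ f true (X0, Y1) ≤ rMassZ μ f false (X0, Y1) ∨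
      srecZmu (restrictRect μ (X0, Y1)) f true
        ((1 - (∑ x, ∑ y, if (x ∈ X0 ∧ y ∈ Y1) ∧ f x y = true then μ x y * rcov w x y else 0) /
            rMassZ μ f true (X0, Y1)) + 30 * δ ^ ((1 : ℝ) / 4)) δ ≤ 0.9 * D) ∨
    (2 * rMassZ μ f true (X1, Y0) ≤ rMassZ μ f false (X1, Y0) ∨
      srecZmu (restrictRect μ (X1, Y0)) f true
        ((1 - (∑ x, ∑ y, if (x ∈ X1 ∧ y ∈ Y0) ∧ f x y = true then μ x y * rcov w x y else 0) /
            rMassZ μ f true (X1, Y0)) + 30 * δ ^ ((1 : ℝ) / 4)) δ ≤ 0.9 * D) := by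
  classical
  by_cases h01 : 2 * rMassZ μ f true (X0, Y1) ≤ rMassZ μ f false (X0, Y1)
  · exact Or.inl (Or.inl h01)
  by_cases h10 : 2 * rMassZ μ f true (X1, Y0) ≤ rMassZ μ f false (X1, Y0)
  · exact Or.inr (Or.inl h10)
  push_neg at h01 h10
  obtain ⟨hδ0, hδ1⟩ := hδ
  have hμ0 : ∀ x y, 0 ≤ μ x y := fun x y => by
    rw [hμ]; exact mul_nonneg (hA.1 x) (hB.1 y)
  set lam := δ ^ ((1 : ℝ) / 4) with hlamdef
  have hlam : 0 < lam := Real.rpow_pos_of_pos hδ0 _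
  have hsqrt : Real.sqrt δ = lam * lam := by
    rw [Real.sqrt_eq_rpow, show (1 / 2 : ℝ) = (1 : ℝ) / 4 + (1 : ℝ) / 4 by norm_num,
      Real.rpow_add hδ0]
  have hmassEq : ∀ (S : Finset X) (T : Finset Y),
      rMass μ (S, T) = (∑ x ∈ S, μA x) * (∑ y ∈ T, μB y) := by
    intro S T
    unfold rMass
    simp only [hμ]
    exact prod_split μA μB S T
  set a := ∑ x ∈ X0, μA x with hadef
  set b := ∑ y ∈ Y0, μB y with hbdef
  set a' := ∑ x ∈ X1, μA x with ha'def
  set b' := ∑ y ∈ Y1, μB y with hb'def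
  have haz : 0 ≤ a := Finset.sum_nonneg fun x _ => hA.1 x
  have ha'z : 0 ≤ a' := Finset.sum_nonneg fun x _ => hA.1 x
  have hbz : 0 ≤ b := Finset.sum_nonneg fun y _ => hB.1 y
  have hb'z : 0 ≤ b' := Finset.sum_nonneg fun y _ => hB.1 y
  have posmul : ∀ {u v : ℝ}, 0 < u * v → 0 ≤ u → 0 ≤ v → 0 < u ∧ 0 < v := by
    intro u v h hu hv
    rcases mul_pos_iff.mp h with ⟨h1, h2⟩ | ⟨h1, h2⟩
    · exact ⟨h1, h2⟩
    · constructor <;> linarith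
  obtain ⟨ha, hb⟩ := posmul (by rw [← hmassEq X0 Y0]; exact hpos00) haz hbz
  obtain ⟨-, hb'⟩ := posmul (by rw [← hmassEq X0 Y1]; exact hpos01) haz hb'z
  obtain ⟨ha', -⟩ := posmul (by rw [← hmassEq X1 Y0]; exact hpos10) ha'z hbz
  have hZnn : ∀ z (S : Finset X) (T : Finset Y), 0 ≤ rMassZ μ f z (S, T) := by
    intro z S T
    unfold rMassZ
    refine Finset.sum_nonneg fun x _ => Finset.sum_nonneg fun y _ => ?_
    split_ifs
    · exact hμ0 x y
    · exact le_rfl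
  have hZsplit : ∀ (S : Finset X) (T : Finset Y),
      rMassZ μ f false (S, T) + rMassZ μ f true (S, T) = rMass μ (S, T) := by
    intro S T
    unfold rMassZ rMass
    rw [← Finset.sum_add_distrib]
    refine Finset.sum_congr rfl fun x _ => ?_
    rw [← Finset.sum_add_distrib]
    refine Finset.sum_congr rfl fun y _ => ?_
    by_cases hm : x ∈ (S, T).1 ∧ y ∈ (S, T).2
    · cases hfb : f x y <;> simp [hm, hfb]
    · simp [hm]
  have hmass01 : 0 < rMassZ μ f true (X0, Y1) := by
    have h1 := hZsplit X0 Y1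
    have h2 := hmassEq X0 Y1
    nlinarith [mul_pos ha hb']
  have hmass10 : 0 < rMassZ μ f true (X1, Y0) := by
    have h1 := hZsplit X1 Y0
    have h2 := hmassEq X1 Y0
    nlinarith [mul_pos ha' hb]
  have hab'le : a * b' ≤ 3 * rMassZ μ f true (X0, Y1) := by
    have h1 := hZsplit X0 Y1
    have h2 := hmassEq X0 Y1
    linarith
  have ha'ble : a' * b ≤ 3 * rMassZ μ f true (X1, Y0) := by
    have h1 := hZsplit X1 Y0
    have h2 := hmassEq X1 Y0
    linarith
  have hbr : ∀ (R : Finset X × Finset Y) (U : Finset X) (V : Finset Y),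
      (∑ x, ∑ y, if (x ∈ R.1 ∧ y ∈ R.2) ∧ (x ∈ U ∧ y ∈ V) then μ x y else 0)
        = (∑ x ∈ R.1 ∩ U, μA x) * (∑ y ∈ R.2 ∩ V, μB y) := by
    intro R U V
    simp only [hμ]
    exact bridge μA μB R.1 U R.2 V
  have hsnn : ∀ (R : Finset X × Finset Y) (U : Finset X), 0 ≤ ∑ x ∈ R.1 ∩ U, μA x :=
    fun R U => Finset.sum_nonneg fun x _ => hA.1 x
  have htnn : ∀ (R : Finset X × Finset Y) (V : Finset Y), 0 ≤ ∑ y ∈ R.2 ∩ V, μB y :=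
    fun R V => Finset.sum_nonneg fun y _ => hB.1 y
  have hmnn : ∀ (U : Finset X) (V : Finset Y) (R : Finset X × Finset Y),
      0 ≤ (∑ x, ∑ y, if (x ∈ R.1 ∧ y ∈ R.2) ∧ ((x ∈ U ∧ y ∈ V) ∧ f x y = true)
        then μ x y else 0) := by
    intro U V R
    refine Finset.sum_nonneg fun x _ => Finset.sum_nonneg fun y _ => ?_
    split_ifs
    · exact hμ0 x y
    · exact le_rfl
  have hmle : ∀ (U : Finset X) (V : Finset Y) (R : Finset X × Finset Y),
      (∑ x, ∑ y, if (x ∈ R.1 ∧ y ∈ R.2) ∧ ((x ∈ U ∧ y ∈ V) ∧ f x y = true) then μ x y else 0)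
        ≤ (∑ x ∈ R.1 ∩ U, μA x) * (∑ y ∈ R.2 ∩ V, μB y) := by
    intro U V R
    rw [← hbr R U V]
    refine Finset.sum_le_sum fun x _ => Finset.sum_le_sum fun y _ => ?_
    split_ifs with h1 h2
    · exact le_rfl
    · exact absurd ⟨h1.1, h1.2.1⟩ h2
    · exact hμ0 x y
    · exact le_rfl
  -- the key averaged bound on the (X0, Y0) part
  have G1 : ∑ R : Finset X × Finset Y,
      w R * ((∑ x ∈ R.1 ∩ X0, μA x) * (∑ y ∈ R.2 ∩ Y0, μB y))
      ≤ 2 * (lam * lam) * (a * b) := by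
    have e : (∑ x, ∑ y, if x ∈ X0 ∧ y ∈ Y0 then μ x y * rcov w x y else 0)
        = ∑ R : Finset X × Finset Y,
            w R * ((∑ x ∈ R.1 ∩ X0, μA x) * (∑ y ∈ R.2 ∩ Y0, μB y)) := by
      rw [swap_sum μ w (fun x y => x ∈ X0 ∧ y ∈ Y0)]
      exact Finset.sum_congr rfl fun R _ => by rw [hbr R X0 Y0]
    rw [← e]
    have step1 : (∑ x, ∑ y, if x ∈ X0 ∧ y ∈ Y0 then μ x y * rcov w x y else 0)
        ≤ rMassZ μ f true (X0, Y0) + δ * rMassZ μ f false (X0, Y0) := by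
      have e2 : rMassZ μ f true (X0, Y0) + δ * rMassZ μ f false (X0, Y0)
          = ∑ x, ∑ y, ((if (x ∈ X0 ∧ y ∈ Y0) ∧ f x y = true then μ x y else 0)
              + δ * (if (x ∈ X0 ∧ y ∈ Y0) ∧ f x y = false then μ x y else 0)) := by
        unfold rMassZ
        rw [Finset.mul_sum, ← Finset.sum_add_distrib]
        refine Finset.sum_congr rfl fun x _ => ?_
        rw [Finset.mul_sum, ← Finset.sum_add_distrib]
      rw [e2]
      refine Finset.sum_le_sum fun x _ => Finset.sum_le_sum fun y _ => ?_
      by_cases hm : x ∈ X0 ∧ y ∈ Y0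
      · cases hfb : f x y
        · simp only [hm, hfb, true_and, if_true, if_false]
          simp only [Bool.false_eq_true, if_false]
          nlinarith [mul_le_mul_of_nonneg_left (hpack x y hfb) (hμ0 x y)]
        · simp only [hm, hfb, true_and, if_true]
          simp only [Bool.true_eq_false, if_false]
          nlinarith [mul_le_mul_of_nonneg_left (hone x y) (hμ0 x y)]
      · simp [hm]
    have hZ00 : rMassZ μ f false (X0, Y0) ≤ a * b := by
      rw [← hmassEq X0 Y0]
      unfold rMassZ rMass
      refine Finset.sum_le_sum fun x _ => Finset.sum_le_sum fun y _ => ?_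
      split_ifs with h1 h2
      · exact le_rfl
      · exact absurd h1.1 h2
      · exact hμ0 x y
      · exact le_rfl
    have hdsq : δ ≤ Real.sqrt δ := (Real.le_sqrt hδ0.le hδ0.le).mpr (by nlinarith)
    have hs0 : 0 ≤ Real.sqrt δ := Real.sqrt_nonneg δ
    have hend : rMassZ μ f true (X0, Y0) + δ * rMassZ μ f false (X0, Y0)
        ≤ 2 * (lam * lam) * (a * b) := by
      rw [← hsqrt]
      have h0 := hZnn false X0 Y0
      nlinarith [hbias, hdsq, hZ00, hs0, mul_le_mul_of_nonneg_left hZ00 hs0]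
    linarith
  -- the trivial bound on the (X1, Y1) part
  have G2 : ∑ R : Finset X × Finset Y,
      w R * ((∑ x ∈ R.1 ∩ X1, μA x) * (∑ y ∈ R.2 ∩ Y1, μB y))
      ≤ a' * b' := by
    have e : (∑ x, ∑ y, if x ∈ X1 ∧ y ∈ Y1 then μ x y * rcov w x y else 0)
        = ∑ R : Finset X × Finset Y,
            w R * ((∑ x ∈ R.1 ∩ X1, μA x) * (∑ y ∈ R.2 ∩ Y1, μB y)) := by
      rw [swap_sum μ w (fun x y => x ∈ X1 ∧ y ∈ Y1)]
      exact Finset.sum_congr rfl fun R _ => by rw [hbr R X1 Y1]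
    rw [← e]
    have e3 : (∑ x, ∑ y, if x ∈ X1 ∧ y ∈ Y1 then μ x y else 0) = a' * b' := by
      simp only [hμ]
      exact prod_split μA μB X1 Y1
    rw [← e3]
    refine Finset.sum_le_sum fun x _ => Finset.sum_le_sum fun y _ => ?_
    split_ifs with h
    · nlinarith [mul_le_mul_of_nonneg_left (hone x y) (hμ0 x y)]
    · exact le_rfl
  -- the kept predicates
  set K1 : Finset X × Finset Y → Prop := fun R =>
    ((∑ x ∈ R.1 ∩ X0, μA x) * (∑ y ∈ R.2 ∩ Y0, μB y)) * b'
        < lam * (((∑ x ∈ R.1 ∩ X0, μA x) * (∑ y ∈ R.2 ∩ Y1, μB y)) * b)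
    ∧ lam * (((∑ x ∈ R.1 ∩ X1, μA x) * (∑ y ∈ R.2 ∩ Y1, μB y)) * a)
        < ((∑ x ∈ R.1 ∩ X0, μA x) * (∑ y ∈ R.2 ∩ Y1, μB y)) * a' with hK1def
  set K2 : Finset X × Finset Y → Prop := fun R =>
    ((∑ x ∈ R.1 ∩ X0, μA x) * (∑ y ∈ R.2 ∩ Y0, μB y)) * a'
        < lam * (((∑ x ∈ R.1 ∩ X1, μA x) * (∑ y ∈ R.2 ∩ Y0, μB y)) * a)
    ∧ lam * (((∑ x ∈ R.1 ∩ X1, μA x) * (∑ y ∈ R.2 ∩ Y1, μB y)) * b)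
        < ((∑ x ∈ R.1 ∩ X1, μA x) * (∑ y ∈ R.2 ∩ Y0, μB y)) * b' with hK2def
  have L1 := lossA (ι := Finset X × Finset Y) w
      (fun R => (∑ x ∈ R.1 ∩ X0, μA x) * (∑ y ∈ R.2 ∩ Y0, μB y))
      (fun R => (∑ x ∈ R.1 ∩ X0, μA x) * (∑ y ∈ R.2 ∩ Y1, μB y))
      (fun R => (∑ x ∈ R.1 ∩ X1, μA x) * (∑ y ∈ R.2 ∩ Y1, μB y))
      (fun R => ∑ x, ∑ y, if (x ∈ R.1 ∧ y ∈ R.2) ∧ ((x ∈ X0 ∧ y ∈ Y1) ∧ f x y = true)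
        then μ x y else 0)
      K1 a b a' b' lam ha hb ha' hb' hlam hw0
      (fun R => mul_nonneg (hsnn R X0) (htnn R Y0))
      (fun R => mul_nonneg (hsnn R X1) (htnn R Y1))
      (fun R => hmnn X0 Y1 R)
      (fun R => hmle X0 Y1 R)
      (fun R hn => by
        rw [hK1def] at hn
        simp only [not_and_or, not_lt] at hn
        exact hn)
      G1 G2
  have L2 := lossA (ι := Finset X × Finset Y) w
      (fun R => (∑ x ∈ R.1 ∩ X0, μA x) * (∑ y ∈ R.2 ∩ Y0, μB y))
      (fun R => (∑ x ∈ R.1 ∩ X1, μA x) * (∑ y ∈ R.2 ∩ Y0, μB y))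
      (fun R => (∑ x ∈ R.1 ∩ X1, μA x) * (∑ y ∈ R.2 ∩ Y1, μB y))
      (fun R => ∑ x, ∑ y, if (x ∈ R.1 ∧ y ∈ R.2) ∧ ((x ∈ X1 ∧ y ∈ Y0) ∧ f x y = true)
        then μ x y else 0)
      K2 b a b' a' lam hb ha hb' ha' hlam hw0
      (fun R => mul_nonneg (hsnn R X0) (htnn R Y0))
      (fun R => mul_nonneg (hsnn R X1) (htnn R Y1))
      (fun R => hmnn X1 Y0 R)
      (fun R => hmle X1 Y0 R)
      (fun R hn => by
        rw [hK2def] at hn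
        simp only [not_and_or, not_lt] at hn
        exact hn)
      (by rw [mul_comm b a]; exact G1)
      (by rw [mul_comm b' a']; exact G2)
  have hdisj : ∀ R, K1 R → K2 R → False := by
    intro R hk1 hk2
    rw [hK1def] at hk1
    rw [hK2def] at hk2
    exact keptB ((∑ x ∈ R.1 ∩ X0, μA x) * (∑ y ∈ R.2 ∩ Y0, μB y))
      ((∑ x ∈ R.1 ∩ X0, μA x) * (∑ y ∈ R.2 ∩ Y1, μB y))
      ((∑ x ∈ R.1 ∩ X1, μA x) * (∑ y ∈ R.2 ∩ Y0, μB y))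
      ((∑ x ∈ R.1 ∩ X1, μA x) * (∑ y ∈ R.2 ∩ Y1, μB y))
      a b a' b' lam ha hb ha' hb'
      (mul_nonneg (hsnn R X0) (htnn R Y0))
      (mul_nonneg (hsnn R X1) (htnn R Y1))
      (mul_nonneg (hsnn R X0) (htnn R Y1))
      (mul_nonneg (hsnn R X1) (htnn R Y0))
      (by ring) hk1.1 hk1.2 hk2.1 hk2.2
  have hsum12 : (∑ R : Finset X × Finset Y, if K1 R then w R else 0)
      + (∑ R : Finset X × Finset Y, if K2 R then w R else 0) ≤ D := by
    refine le_trans ?_ hwD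
    rw [← Finset.sum_add_distrib]
    refine Finset.sum_le_sum fun R _ => ?_
    by_cases h1 : K1 R
    · by_cases h2 : K2 R
      · exact (hdisj R h1 h2).elim
      · rw [if_pos h1, if_neg h2, add_zero]
    · by_cases h2 : K2 R
      · rw [if_neg h1, if_pos h2, zero_add]
      · rw [if_neg h1, if_neg h2, add_zero]
        exact hw0 R
  have hloss01 : ∑ R : Finset X × Finset Y, (w R - (if K1 R then w R else 0)) *
      (∑ x, ∑ y, if (x ∈ R.1 ∧ y ∈ R.2) ∧ ((x ∈ X0 ∧ y ∈ Y1) ∧ f x y = true)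
        then μ x y else 0)
      ≤ 30 * lam * rMassZ μ f true (X0, Y1) := by
    have h1 := mul_le_mul_of_nonneg_left hab'le hlam.le
    have h2 := mul_nonneg hlam.le hmass01.le
    linarith [L1]
  have hloss10 : ∑ R : Finset X × Finset Y, (w R - (if K2 R then w R else 0)) *
      (∑ x, ∑ y, if (x ∈ R.1 ∧ y ∈ R.2) ∧ ((x ∈ X1 ∧ y ∈ Y0) ∧ f x y = true)
        then μ x y else 0)
      ≤ 30 * lam * rMassZ μ f true (X1, Y0) := by
    have h1 := mul_le_mul_of_nonneg_left ha'ble hlam.le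
    have h2 := mul_nonneg hlam.le hmass10.le
    linarith [L2]
  rcases le_total (∑ R : Finset X × Finset Y, if K1 R then w R else 0)
      (∑ R : Finset X × Finset Y, if K2 R then w R else 0) with hle | hle
  · refine Or.inl (Or.inr ?_)
    have hfe := side_feasible f μ hμ0 δ lam w hw0 hpack hone X0 Y1 K1 hmass01 hloss01
    have hnn2 : 0 ≤ ∑ R : Finset X × Finset Y, if K2 R then w R else 0 :=
      Finset.sum_nonneg fun R _ => by split_ifs; exacts [hw0 R, le_rfl]
    refine le_trans hfe ?_
    linarith
  · refine Or.inr (Or.inr ?_)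
    have hfe := side_feasible f μ hμ0 δ lam w hw0 hpack hone X1 Y0 K2 hmass10 hloss10
    have hnn1 : 0 ≤ ∑ R : Finset X × Finset Y, if K1 R then w R else 0 :=
      Finset.sum_nonneg fun R _ => by split_ifs; exacts [hw0 R, le_rfl]
    refine le_trans hfe ?_
    linarith
end

section
/- For every function f : {0,1}^n → {0,1} and every ε, δ with 1/2 > ε > δ > 0: log qprt_δ(f) ≤ (2/(0.5 − ε)² · log(1/δ)) · log qprt_ε(f), up to a universal constant factor (i.e., there is a universal constant C with log qprt_δ(f) ≤ C·(1/(0.5−ε)²)·log(1/δ)·log qprt_ε(f)). -/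
open scoped BigOperators
open scoped Classical

/-! ## Auxiliary development for error reduction of the query partition bound -/

noncomputable section QprtAux

open Finset

namespace QprtAux

/-- The subcube consisting of the single point `x`. -/
def pointCube {n : ℕ} (x : Fin n → Bool) : Subcube n := fun i => some (x i)

lemma memCube_pointCube {n : ℕ} (x y : Fin n → Bool) :
    memCube (pointCube x) y ↔ x = y := by
  constructor
  · intro h
    funext i
    exact (h i (x i) rfl).symm
  · rintro rfl i b hb
    exact (Option.some_inj.mp hb)

lemma pointCube_injective {n : ℕ} : Function.Injective (pointCube (n := n)) := by
  intro x y h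
  funext i
  have := congrFun h i
  simpa [pointCube] using this

/-- Intersection of a tuple of subcubes. -/
def interCube {n k : ℕ} (t : Fin k → Bool × Subcube n) : Subcube n :=
  fun j => if h : ∃ b, ∃ i, (t i).2 j = some b then some h.choose else none

/-- The subcubes in the tuple are pairwise consistent. -/
def compat {n k : ℕ} (t : Fin k → Bool × Subcube n) : Prop :=
  ∀ j b b', (∃ i, (t i).2 j = some b) → (∃ i, (t i).2 j = some b') → b = b'

/-- `x` belongs to every subcube of the tuple. -/
def allMem {n k : ℕ} (t : Fin k → Bool × Subcube n) (x : Fin n → Bool) : Prop :=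
  ∀ i, memCube (t i).2 x

lemma allMem_memCube_inter {n k : ℕ} {t : Fin k → Bool × Subcube n} {x : Fin n → Bool}
    (h : allMem t x) : memCube (interCube t) x := by
  intro j b hb
  unfold interCube at hb
  split at hb
  · rename_i hex
    obtain ⟨i, hi⟩ := hex.choose_spec
    have := h i j _ hi
    rw [this]
    exact Option.some_inj.mp hb
  · exact absurd hb (by simp)

lemma allMem_compat {n k : ℕ} {t : Fin k → Bool × Subcube n} {x : Fin n → Bool}
    (h : allMem t x) : compat t := by
  intro j b b' ⟨i, hi⟩ ⟨i', hi'⟩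
  have h1 := h i j b hi
  have h2 := h i' j b' hi'
  rw [← h1, ← h2]

lemma compat_allMem {n k : ℕ} {t : Fin k → Bool × Subcube n} {x : Fin n → Bool}
    (hc : compat t) (h : memCube (interCube t) x) : allMem t x := by
  intro i j b hb
  have hex : ∃ b', ∃ i', (t i').2 j = some b' := ⟨b, i, hb⟩
  have hsome : interCube t j = some hex.choose := by
    unfold interCube
    rw [dif_pos hex]
  have hx := h j _ hsome
  have : b = hex.choose := hc j b hex.choose ⟨i, hb⟩ hex.choose_spec
  rw [hx, this]

/-- Majority output of a tuple. -/
def majOut {n k : ℕ} (t : Fin k → Bool × Subcube n) : Bool :=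
  decide (k < 2 * (univ.filter fun i => (t i).1 = true).card)

/-- The amplified weight function. -/
def ampW {n : ℕ} (k : ℕ) (w : Bool → Subcube n → ℝ) (z : Bool) (B : Subcube n) : ℝ :=
  ∑ t : Fin k → Bool × Subcube n,
    if compat t ∧ majOut t = z ∧ interCube t = B then ∏ i, w (t i).1 (t i).2 else 0

lemma ampW_nonneg {n : ℕ} (k : ℕ) (w : Bool → Subcube n → ℝ) (hw : ∀ z A, 0 ≤ w z A)
    (z : Bool) (B : Subcube n) : 0 ≤ ampW k w z B := by
  apply Finset.sum_nonneg
  intro t _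
  split
  · exact Finset.prod_nonneg fun i _ => hw _ _
  · exact le_refl 0

/-- Sum over tuples of a product of per-coordinate indicators factorizes. -/
lemma sum_tuple_ite {k : ℕ} {P : Type} [Fintype P] (Q : Fin k → P → Prop) (F : P → ℝ) :
    (∑ t : Fin k → P, if ∀ i, Q i (t i) then ∏ i, F (t i) else 0)
      = ∏ i, ∑ p : P, (if Q i p then F p else 0) := by
  classical
  rw [Finset.prod_univ_sum]
  rw [Fintype.piFinset_univ]
  apply Finset.sum_congr rfl
  intro t _
  rw [Finset.prod_ite_zero]
  simp


lemma ite_sum {α : Type} {c : Prop} [Decidable c] {s : Finset α} (f : α → ℝ) :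
    (if c then ∑ a ∈ s, f a else 0) = ∑ a ∈ s, if c then f a else 0 := by
  split <;> simp

lemma cubeCov_ampW {n k : ℕ} (w : Bool → Subcube n → ℝ) (z : Bool) (x : Fin n → Bool) :
    cubeCov (ampW k w z) x =
      ∑ t : Fin k → Bool × Subcube n,
        if majOut t = z ∧ allMem t x then ∏ i, w (t i).1 (t i).2 else 0 := by
  unfold cubeCov ampW
  have step1 : ∀ A : Subcube n,
      (if memCube A x then
        (∑ t : Fin k → Bool × Subcube n,
          if compat t ∧ majOut t = z ∧ interCube t = A then ∏ i, w (t i).1 (t i).2 else 0)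
       else 0)
      = ∑ t : Fin k → Bool × Subcube n,
          (if interCube t = A then
            (if (compat t ∧ majOut t = z) ∧ memCube A x then ∏ i, w (t i).1 (t i).2 else 0)
           else 0) := by
    intro A
    rw [ite_sum]
    apply Finset.sum_congr rfl
    intro t _
    split_ifs <;> first | rfl | tauto
  rw [Finset.sum_congr rfl fun A _ => step1 A, Finset.sum_comm]
  apply Finset.sum_congr rfl
  intro t _
  rw [Finset.sum_ite_eq]
  simp only [Finset.mem_univ, if_true]
  apply if_congr _ rfl rfl
  constructor
  · rintro ⟨⟨hc, hm⟩, hmem⟩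
    exact ⟨hm, compat_allMem hc hmem⟩
  · rintro ⟨hm, hall⟩
    exact ⟨⟨allMem_compat hall, hm⟩, allMem_memCube_inter hall⟩

/-- Total coverage of the amplified weights. -/
lemma ampW_total {n k : ℕ} (w : Bool → Subcube n → ℝ) (x : Fin n → Bool)
    (htot : cubeCov (w false) x + cubeCov (w true) x = 1) :
    cubeCov (ampW k w false) x + cubeCov (ampW k w true) x = 1 := by
  rw [cubeCov_ampW, cubeCov_ampW, ← Finset.sum_add_distrib]
  have step : ∀ t : Fin k → Bool × Subcube n,
      ((if majOut t = false ∧ allMem t x then ∏ i, w (t i).1 (t i).2 else 0) +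
       (if majOut t = true ∧ allMem t x then ∏ i, w (t i).1 (t i).2 else 0))
      = if ∀ i, memCube (t i).2 x then ∏ i, w (t i).1 (t i).2 else 0 := by
    intro t
    have : allMem t x ↔ ∀ i, memCube (t i).2 x := Iff.rfl
    cases hmj : majOut t <;> split_ifs <;> simp_all [allMem]
  rw [Finset.sum_congr rfl fun t _ => step t]
  have hone : (∑ p : Bool × Subcube n, if memCube p.2 x then w p.1 p.2 else 0) = 1 := by
    rw [Fintype.sum_prod_type, Fintype.sum_bool, add_comm]
    exact htot
  calc (∑ t : Fin k → Bool × Subcube n,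
          if ∀ i, memCube (t i).2 x then ∏ i, w (t i).1 (t i).2 else 0)
      = ∏ _i : Fin k, ∑ p : Bool × Subcube n, (if memCube p.2 x then w p.1 p.2 else 0) :=
        sum_tuple_ite (fun _ (p : Bool × Subcube n) => memCube p.2 x) (fun p => w p.1 p.2)
    _ = 1 := by rw [Finset.prod_congr rfl fun i _ => hone]; simp


lemma cubeCov_nonneg {n : ℕ} (v : Subcube n → ℝ) (hv : ∀ A, 0 ≤ v A) (x : Fin n → Bool) :
    0 ≤ cubeCov v x := by
  apply Finset.sum_nonneg
  intro A _
  split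
  · exact hv A
  · exact le_refl 0

lemma ite_inst {c : Prop} (h1 h2 : Decidable c) (a b : ℝ) :
    @ite ℝ c h1 a b = @ite ℝ c h2 a b := by
  congr 1

lemma ite_ite_and {c d : Prop} [Decidable c] [Decidable d] (v : ℝ) :
    (if c then (if d then v else 0) else 0) = if c ∧ d then v else 0 := by
  split_ifs <;> first | rfl | tauto

lemma majOut_eq_not_iff {n m : ℕ} (z₀ : Bool) (t : Fin (2*m+1) → Bool × Subcube n) :
    (majOut t = !z₀) ↔ (m+1 ≤ (univ.filter fun i => (t i).1 ≠ z₀).card) := by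
  have hcard : ((univ : Finset (Fin (2*m+1))).filter fun i => (t i).1 = true).card
      + ((univ : Finset (Fin (2*m+1))).filter fun i => ¬ ((t i).1 = true)).card = 2*m+1 := by
    rw [Finset.card_filter_add_card_filter_not]
    simp
  cases z₀
  · have hf : ((univ : Finset (Fin (2*m+1))).filter fun i => (t i).1 ≠ false)
        = (univ.filter fun i => (t i).1 = true) := by
      apply Finset.filter_congr
      intro i _
      cases (t i).1 <;> simp
    rw [hf]
    simp only [majOut, Bool.not_false, decide_eq_true_eq]
    omega
  · have hf : ((univ : Finset (Fin (2*m+1))).filter fun i => (t i).1 ≠ true)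
        = (univ.filter fun i => ¬ ((t i).1 = true)) := rfl
    rw [hf]
    simp only [majOut, Bool.not_true, decide_eq_false_iff_not, decide_eq_true_eq]
    omega

lemma err_master {n m : ℕ} (w : Bool → Subcube n → ℝ) (x : Fin n → Bool) (z₀ : Bool) :
    (∑ t : Fin (2*m+1) → Bool × Subcube n,
        if majOut t = !z₀ ∧ allMem t x then ∏ i, w (t i).1 (t i).2 else 0)
      = ∑ s : Fin (2*m+1) → Bool,
          if m+1 ≤ (univ.filter fun i => s i = true).card
          then ∏ i, (if s i = true then cubeCov (w (!z₀)) x else cubeCov (w z₀) x)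
          else 0 := by
  have hsingle : ∀ b : Bool,
      (∑ p : Bool × Subcube n, if (decide (p.1 ≠ z₀) = b) ∧ memCube p.2 x then w p.1 p.2 else 0)
      = (if b = true then cubeCov (w (!z₀)) x else cubeCov (w z₀) x) := by
    intro b
    rw [Fintype.sum_prod_type, Fintype.sum_bool]
    cases z₀ <;> cases b <;> simp [cubeCov]
  have hprod : ∀ s : Fin (2*m+1) → Bool,
      (∏ i, (if s i = true then cubeCov (w (!z₀)) x else cubeCov (w z₀) x))
      = ∑ t : Fin (2*m+1) → Bool × Subcube n,
          if (∀ i, decide ((t i).1 ≠ z₀) = s i ∧ memCube (t i).2 x)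
          then ∏ i, w (t i).1 (t i).2 else 0 := by
    intro s
    rw [Finset.prod_congr rfl fun i _ => (hsingle (s i)).symm]
    have h := (sum_tuple_ite
      (fun i (p : Bool × Subcube n) => decide (p.1 ≠ z₀) = s i ∧ memCube p.2 x)
      (fun p => w p.1 p.2)).symm
    convert h using 2 with t ht
    · exact Finset.sum_congr rfl fun p _ => ite_inst _ _ _ _
    · exact ite_inst _ _ _ _
  symm
  calc (∑ s : Fin (2*m+1) → Bool,
          if m+1 ≤ (univ.filter fun i => s i = true).card
          then ∏ i, (if s i = true then cubeCov (w (!z₀)) x else cubeCov (w z₀) x)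
          else 0)
      = ∑ s : Fin (2*m+1) → Bool, ∑ t : Fin (2*m+1) → Bool × Subcube n,
          if (m+1 ≤ (univ.filter fun i => s i = true).card)
             ∧ (∀ i, decide ((t i).1 ≠ z₀) = s i ∧ memCube (t i).2 x)
          then ∏ i, w (t i).1 (t i).2 else 0 := by
        apply Finset.sum_congr rfl
        intro s _
        rw [hprod s, ite_sum]
        exact Finset.sum_congr rfl fun t _ => ite_ite_and _
    _ = ∑ t : Fin (2*m+1) → Bool × Subcube n, ∑ s : Fin (2*m+1) → Bool,
          if s = (fun i => decide ((t i).1 ≠ z₀))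
             ∧ ((m+1 ≤ (univ.filter fun i =>
                  (fun i => decide ((t i).1 ≠ z₀)) i = true).card) ∧ allMem t x)
          then ∏ i, w (t i).1 (t i).2 else 0 := by
        rw [Finset.sum_comm]
        apply Finset.sum_congr rfl
        intro t _
        apply Finset.sum_congr rfl
        intro s _
        apply if_congr _ rfl rfl
        constructor
        · rintro ⟨hcnt, hall⟩
          have hs : s = fun i => decide ((t i).1 ≠ z₀) := funext fun i => ((hall i).1).symm
          subst hs
          exact ⟨rfl, hcnt, fun i => (hall i).2⟩
        · rintro ⟨hs, hcnt, hall⟩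
          subst hs
          exact ⟨hcnt, fun i => ⟨rfl, hall i⟩⟩
    _ = ∑ t : Fin (2*m+1) → Bool × Subcube n,
          if (m+1 ≤ (univ.filter fun i => decide ((t i).1 ≠ z₀) = true).card) ∧ allMem t x
          then ∏ i, w (t i).1 (t i).2 else 0 := by
        apply Finset.sum_congr rfl
        intro t _
        have h1 : ∀ s : Fin (2*m+1) → Bool,
            (if s = (fun i => decide ((t i).1 ≠ z₀))
               ∧ ((m+1 ≤ (univ.filter fun i =>
                    (fun i => decide ((t i).1 ≠ z₀)) i = true).card) ∧ allMem t x)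
             then ∏ i, w (t i).1 (t i).2 else 0)
            = (if s = (fun i => decide ((t i).1 ≠ z₀))
               then (if (m+1 ≤ (univ.filter fun i =>
                      (fun i => decide ((t i).1 ≠ z₀)) i = true).card) ∧ allMem t x
                     then ∏ i, w (t i).1 (t i).2 else 0)
               else 0) := fun s => (ite_ite_and _).symm
        rw [Finset.sum_congr rfl fun s _ => h1 s,
          Finset.sum_ite_eq' univ (fun i => decide ((t i).1 ≠ z₀))]
        simp only [Finset.mem_univ, if_true]
    _ = ∑ t : Fin (2*m+1) → Bool × Subcube n,
          if majOut t = !z₀ ∧ allMem t x then ∏ i, w (t i).1 (t i).2 else 0 := by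
        apply Finset.sum_congr rfl
        intro t _
        apply if_congr _ rfl rfl
        rw [majOut_eq_not_iff]
        have : ((univ : Finset (Fin (2*m+1))).filter fun i => decide ((t i).1 ≠ z₀) = true)
            = (univ.filter fun i => (t i).1 ≠ z₀) := by
          apply Finset.filter_congr
          intro i _
          simp
        rw [this]


lemma ampW_err {n m : ℕ} (w : Bool → Subcube n → ℝ) (hw : ∀ z A, 0 ≤ w z A)
    (x : Fin n → Bool) (z₀ : Bool) (ε : ℝ) (hε0 : 0 < ε) (hε2 : ε ≤ 1/2)
    (hcov : 1 - ε ≤ cubeCov (w z₀) x)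
    (htot : cubeCov (w false) x + cubeCov (w true) x = 1) :
    cubeCov (ampW (2*m+1) w (!z₀)) x ≤ (4*ε*(1-ε))^m := by
  set q := cubeCov (w (!z₀)) x with hq
  set c := cubeCov (w z₀) x with hcdef
  have hq0 : 0 ≤ q := cubeCov_nonneg _ (fun A => hw _ A) x
  have hc0 : 0 ≤ c := cubeCov_nonneg _ (fun A => hw _ A) x
  have hqc : q + c = 1 := by
    cases z₀
    · simpa [hq, hcdef, add_comm] using htot
    · simpa [hq, hcdef, add_comm] using htot
  have hqε : q ≤ ε := by linarith
  have hqlec : q ≤ c := by linarith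
  have hc1 : c ≤ 1 := by linarith
  rw [cubeCov_ampW, err_master]
  have hterm : ∀ s : Fin (2*m+1) → Bool,
      (if m+1 ≤ (univ.filter fun i => s i = true).card
       then ∏ i, (if s i = true then q else c) else 0) ≤ q^(m+1) * c^m := by
    intro s
    split
    · rename_i hcnt
      have hsplit : ((univ : Finset (Fin (2*m+1))).filter fun i => s i = true).card
          + ((univ : Finset (Fin (2*m+1))).filter fun i => ¬ (s i = true)).card = 2*m+1 := by
        rw [Finset.card_filter_add_card_filter_not]; simp
      have hprodv : (∏ i, (if s i = true then q else c))
          = q ^ ((univ.filter fun i => s i = true).card)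
            * c ^ ((univ.filter fun i => ¬ (s i = true)).card) := by
        rw [Finset.prod_ite, Finset.prod_const, Finset.prod_const]
      rw [hprodv]
      obtain ⟨d, hd⟩ := Nat.exists_eq_add_of_le hcnt
      have hdm : d ≤ m := by omega
      have hcard2 : ((univ : Finset (Fin (2*m+1))).filter fun i => ¬ (s i = true)).card
          = m - d := by omega
      rw [hd, hcard2, pow_add]
      calc q^(m+1) * q^d * c^(m-d)
          ≤ q^(m+1) * c^d * c^(m-d) := by
            apply mul_le_mul_of_nonneg_right _ (pow_nonneg hc0 _)
            exact mul_le_mul_of_nonneg_left (pow_le_pow_left₀ hq0 hqlec d) (pow_nonneg hq0 _)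
        _ = q^(m+1) * c^m := by
            rw [mul_assoc, ← pow_add, Nat.add_sub_cancel' hdm]
    · exact mul_nonneg (pow_nonneg hq0 _) (pow_nonneg hc0 _)
  calc (∑ s : Fin (2*m+1) → Bool,
          if m+1 ≤ (univ.filter fun i => s i = true).card
          then ∏ i, (if s i = true then q else c) else 0)
      ≤ ∑ _s : Fin (2*m+1) → Bool, q^(m+1) * c^m :=
        Finset.sum_le_sum fun s _ => hterm s
    _ = 2^(2*m+1) * (q^(m+1) * c^m) := by
        rw [Finset.sum_const]
        simp [Fintype.card_fun, nsmul_eq_mul]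
    _ = (2*q) * (4*q*c)^m := by
        have h2 : (2:ℝ)^(2*m+1) = 4^m * 2 := by
          rw [pow_succ, pow_mul]; norm_num
        rw [h2]; ring
    _ ≤ 1 * (4*ε*(1-ε))^m := by
        apply mul_le_mul (by linarith)
        · apply pow_le_pow_left₀ (by positivity)
          nlinarith [mul_nonneg (sub_nonneg.mpr hqε) (show (0:ℝ) ≤ 1 - ε - q by linarith)]
        · positivity
        · norm_num
    _ = (4*ε*(1-ε))^m := one_mul _


lemma cubeSize_interCube {n k : ℕ} (t : Fin k → Bool × Subcube n) :
    cubeSize (interCube t) ≤ ∑ i, cubeSize (t i).2 := by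
  unfold cubeSize
  calc ((univ : Finset (Fin n)).filter fun j => (interCube t j).isSome).card
      ≤ ((univ : Finset (Fin k)).biUnion fun i =>
          (univ : Finset (Fin n)).filter fun j => ((t i).2 j).isSome).card := by
        apply Finset.card_le_card
        intro j hj
        simp only [Finset.mem_filter, Finset.mem_univ, true_and] at hj
        unfold interCube at hj
        split at hj
        · rename_i hex
          obtain ⟨i, hi⟩ := hex.choose_spec
          simp only [Finset.mem_biUnion]
          exact ⟨i, Finset.mem_univ i, by simp [Finset.mem_filter, hi]⟩
        · simp at hj
    _ ≤ ∑ i, ((univ : Finset (Fin n)).filter fun j => ((t i).2 j).isSome).card :=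
        Finset.card_biUnion_le

lemma ampW_value {n k : ℕ} (w : Bool → Subcube n → ℝ) (hw : ∀ z A, 0 ≤ w z A) :
    (∑ B : Subcube n, (ampW k w false B + ampW k w true B) * 2 ^ cubeSize B)
      ≤ (∑ A : Subcube n, (w false A + w true A) * 2 ^ cubeSize A) ^ k := by
  have hBsum : ∀ B : Subcube n,
      (ampW k w false B + ampW k w true B)
      = ∑ t : Fin k → Bool × Subcube n,
          if compat t ∧ interCube t = B then ∏ i, w (t i).1 (t i).2 else 0 := by
    intro B
    unfold ampW
    rw [← Finset.sum_add_distrib]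
    apply Finset.sum_congr rfl
    intro t _
    cases hmj : majOut t <;> split_ifs <;> simp_all
  have hstep1 : (∑ B : Subcube n, (ampW k w false B + ampW k w true B) * 2 ^ cubeSize B)
      = ∑ t : Fin k → Bool × Subcube n,
          if compat t then (∏ i, w (t i).1 (t i).2) * 2 ^ cubeSize (interCube t) else 0 := by
    rw [Finset.sum_congr rfl fun B _ => by rw [hBsum B, Finset.sum_mul]]
    rw [Finset.sum_comm]
    apply Finset.sum_congr rfl
    intro t _
    have h1 : ∀ B : Subcube n,
        (if compat t ∧ interCube t = B then ∏ i, w (t i).1 (t i).2 else 0) * 2 ^ cubeSize B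
        = (if interCube t = B
           then (if compat t then (∏ i, w (t i).1 (t i).2) * 2 ^ cubeSize B else 0)
           else 0) := by
      intro B
      split_ifs <;> first | rfl | simp_all
    rw [Finset.sum_congr rfl fun B _ => h1 B, Finset.sum_ite_eq univ (interCube t)]
    simp only [Finset.mem_univ, if_true]
  rw [hstep1]
  have hbound : ∀ t : Fin k → Bool × Subcube n,
      (if compat t then (∏ i, w (t i).1 (t i).2) * 2 ^ cubeSize (interCube t) else 0)
      ≤ ∏ i, (w (t i).1 (t i).2 * 2 ^ cubeSize (t i).2) := by
    intro t
    have hG : ∏ i, (w (t i).1 (t i).2 * 2 ^ cubeSize (t i).2)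
        = (∏ i, w (t i).1 (t i).2) * 2 ^ (∑ i, cubeSize (t i).2) := by
      rw [Finset.prod_mul_distrib, Finset.prod_pow_eq_pow_sum]
    split
    · rw [hG]
      apply mul_le_mul_of_nonneg_left _ (Finset.prod_nonneg fun i _ => hw _ _)
      exact pow_le_pow_right₀ one_le_two (cubeSize_interCube t)
    · rw [hG]
      exact mul_nonneg (Finset.prod_nonneg fun i _ => hw _ _) (by positivity)
  calc (∑ t : Fin k → Bool × Subcube n,
          if compat t then (∏ i, w (t i).1 (t i).2) * 2 ^ cubeSize (interCube t) else 0)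
      ≤ ∑ t : Fin k → Bool × Subcube n, ∏ i, (w (t i).1 (t i).2 * 2 ^ cubeSize (t i).2) :=
        Finset.sum_le_sum fun t _ => hbound t
    _ = ∏ _i : Fin k, ∑ p : Bool × Subcube n, (w p.1 p.2 * 2 ^ cubeSize p.2) := by
        rw [Finset.prod_univ_sum, Fintype.piFinset_univ]
    _ = (∑ p : Bool × Subcube n, (w p.1 p.2 * 2 ^ cubeSize p.2)) ^ k := by
        rw [Finset.prod_const, Finset.card_univ, Fintype.card_fin]
    _ = (∑ A : Subcube n, (w false A + w true A) * 2 ^ cubeSize A) ^ k := by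
        rw [Fintype.sum_prod_type, Fintype.sum_bool, ← Finset.sum_add_distrib]
        congr 1
        apply Finset.sum_congr rfl
        intro A _
        ring


/-- The feasible set of the `qprt` linear program. -/
def feasSet {n : ℕ} (g : (Fin n → Bool) → Bool) (ε : ℝ) : Set ℝ :=
  { v : ℝ | ∃ w : Bool → Subcube n → ℝ,
    (∀ z A, 0 ≤ w z A) ∧
    (∀ x, 1 - ε ≤ cubeCov (w (g x)) x) ∧
    (∀ x, cubeCov (w false) x + cubeCov (w true) x = 1) ∧
    v = ∑ A : Subcube n, (w false A + w true A) * 2 ^ cubeSize A }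

lemma qprt_eq_sInf {n : ℕ} (g : (Fin n → Bool) → Bool) (ε : ℝ) :
    qprt g ε = sInf (feasSet g ε) := rfl

lemma one_le_of_mem_feasSet {n : ℕ} {g : (Fin n → Bool) → Bool} {ε : ℝ} {v : ℝ}
    (hv : v ∈ feasSet g ε) : 1 ≤ v := by
  obtain ⟨w, hw0, _, htot, hveq⟩ := hv
  have key : cubeCov (w false) (fun _ => false) + cubeCov (w true) (fun _ => false)
      ≤ ∑ A : Subcube n, (w false A + w true A) * 2 ^ cubeSize A := by
    unfold cubeCov
    rw [← Finset.sum_add_distrib]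
    apply Finset.sum_le_sum
    intro A _
    have h2 : (1:ℝ) ≤ 2 ^ cubeSize A := one_le_pow₀ one_le_two
    split_ifs
    · exact le_mul_of_one_le_right (add_nonneg (hw0 _ _) (hw0 _ _)) h2
    · simpa using mul_nonneg (add_nonneg (hw0 _ _) (hw0 _ _))
        (le_trans zero_le_one h2)
  rw [hveq]
  have := htot (fun _ => false)
  linarith

lemma feasSet_nonempty {n : ℕ} (g : (Fin n → Bool) → Bool) (ε : ℝ) (hε : 0 ≤ ε) :
    (feasSet g ε).Nonempty := by
  classical
  set w : Bool → Subcube n → ℝ :=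
    fun z A => ∑ x : Fin n → Bool, if pointCube x = A ∧ g x = z then 1 else 0 with hw
  have hcov : ∀ (z : Bool) (y : Fin n → Bool),
      cubeCov (w z) y = if g y = z then 1 else 0 := by
    intro z y
    unfold cubeCov
    rw [Finset.sum_congr rfl fun A _ => ite_sum _, Finset.sum_comm]
    have h1 : ∀ x : Fin n → Bool,
        (∑ A : Subcube n,
          if memCube A y then (if pointCube x = A ∧ g x = z then (1:ℝ) else 0) else 0)
        = if x = y ∧ g x = z then 1 else 0 := by
      intro x
      have h2 : ∀ A : Subcube n,
          (if memCube A y then (if pointCube x = A ∧ g x = z then (1:ℝ) else 0) else 0)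
          = if pointCube x = A
            then (if memCube (pointCube x) y ∧ g x = z then (1:ℝ) else 0) else 0 := by
        intro A
        split_ifs <;> simp_all
      rw [Finset.sum_congr rfl fun A _ => h2 A, Finset.sum_ite_eq univ (pointCube x)]
      simp only [Finset.mem_univ, if_true]
      rw [memCube_pointCube]
      exact ite_inst _ _ _ _
    rw [Finset.sum_congr rfl fun x _ => h1 x]
    have h3 : ∀ x : Fin n → Bool,
        (if x = y ∧ g x = z then (1:ℝ) else 0)
        = if x = y then (if g y = z then (1:ℝ) else 0) else 0 := by
      intro x
      by_cases hxy : x = y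
      · subst hxy; simp
      · simp [hxy]
    rw [Finset.sum_congr rfl fun x _ => h3 x, Finset.sum_ite_eq' univ y]
    simp
  refine ⟨∑ A : Subcube n, (w false A + w true A) * 2 ^ cubeSize A, w, ?_, ?_, ?_, rfl⟩
  · intro z A
    apply Finset.sum_nonneg
    intro x _
    split <;> norm_num
  · intro x
    rw [hcov (g x) x, if_pos rfl]
    linarith
  · intro x
    rw [hcov false x, hcov true x]
    cases g x <;> simp

lemma qprt_le_pow {n : ℕ} (g : (Fin n → Bool) → Bool) (ε δ : ℝ) (m : ℕ)
    (hε0 : 0 < ε) (hε2 : ε ≤ 1/2) (hβ : (4*ε*(1-ε))^m ≤ δ)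
    {v : ℝ} (hv : v ∈ feasSet g ε) :
    qprt g δ ≤ v ^ (2*m+1) := by
  obtain ⟨w, hw0, hcovw, htot, hveq⟩ := hv
  have hmem : (∑ B : Subcube n,
      (ampW (2*m+1) w false B + ampW (2*m+1) w true B) * 2 ^ cubeSize B) ∈ feasSet g δ := by
    refine ⟨ampW (2*m+1) w, fun z A => ampW_nonneg _ _ hw0 z A, ?_,
      fun x => ampW_total w x (htot x), rfl⟩
    intro x
    have htot' := ampW_total (k := 2*m+1) w x (htot x)
    have herr : cubeCov (ampW (2*m+1) w (!(g x))) x ≤ δ :=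
      le_trans (ampW_err w hw0 x (g x) ε hε0 hε2 (hcovw x) (htot x)) hβ
    have hsum : cubeCov (ampW (2*m+1) w (g x)) x + cubeCov (ampW (2*m+1) w (!(g x))) x = 1 := by
      cases hgx : g x
      · simpa using htot'
      · simpa [add_comm] using htot'
    linarith
  rw [qprt_eq_sInf]
  calc sInf (feasSet g δ)
      ≤ ∑ B : Subcube n,
          (ampW (2*m+1) w false B + ampW (2*m+1) w true B) * 2 ^ cubeSize B :=
        csInf_le ⟨1, fun u hu => one_le_of_mem_feasSet hu⟩ hmem
    _ ≤ (∑ A : Subcube n, (w false A + w true A) * 2 ^ cubeSize A) ^ (2*m+1) :=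
        ampW_value w hw0
    _ = v ^ (2*m+1) := by rw [hveq]

lemma qprt_le_pow_inf {n : ℕ} (g : (Fin n → Bool) → Bool) (ε δ : ℝ) (m : ℕ)
    (hε0 : 0 < ε) (hε2 : ε ≤ 1/2) (hβ : (4*ε*(1-ε))^m ≤ δ) :
    qprt g δ ≤ (qprt g ε) ^ (2*m+1) := by
  by_contra hlt
  push_neg at hlt
  have hne : (feasSet g ε).Nonempty := feasSet_nonempty g ε (le_of_lt hε0)
  have hbdd : BddBelow (feasSet g ε) := ⟨1, fun u hu => one_le_of_mem_feasSet hu⟩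
  have hcont : ContinuousAt (fun y : ℝ => y ^ (2*m+1)) (qprt g ε) :=
    (continuous_pow _).continuousAt
  have hev : ∀ᶠ y in nhds (qprt g ε), y ^ (2*m+1) < qprt g δ :=
    hcont.eventually_lt continuousAt_const hlt
  rw [Metric.eventually_nhds_iff] at hev
  obtain ⟨r, hr0, hr⟩ := hev
  have hlt2 : sInf (feasSet g ε) < qprt g ε + r := by
    rw [← qprt_eq_sInf]; linarith
  obtain ⟨v, hv, hvlt⟩ := exists_lt_of_csInf_lt hne hlt2
  have hiv : qprt g ε ≤ v := by
    rw [qprt_eq_sInf]; exact csInf_le hbdd hv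
  have hd : dist v (qprt g ε) < r := by
    rw [Real.dist_eq, abs_of_nonneg (by linarith)]
    linarith
  have h1 := hr hd
  have h2 := qprt_le_pow g ε δ m hε0 hε2 hβ hv
  linarith

end QprtAux

end QprtAux
/-- **Claim 3.3 / A.2 (error reduction for the query partition bound).** There is a
universal constant `C > 0` such that for all `f : {0,1}ⁿ → {0,1}` and `1/2 > ε > δ > 0`,
`log qprt_δ(f) ≤ C · (1/(0.5-ε)²) · log(1/δ) · log qprt_ε(f)`. -/
theorem qprt_error_reduction :
    ∃ C : ℝ, 0 < C ∧
      ∀ (n : ℕ) (f : (Fin n → Bool) → Bool) (ε δ : ℝ),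
        0 < δ → δ < ε → ε < 1 / 2 →
        Real.logb 2 (qprt f δ) ≤
          C * (1 / (0.5 - ε) ^ 2) * Real.logb 2 (1 / δ) * Real.logb 2 (qprt f ε) := by
  classical
  refine ⟨2, by norm_num, ?_⟩
  intro n f ε δ hδ0 hδε hε2
  have hε0 : 0 < ε := lt_trans hδ0 hδε
  set s : ℝ := 1/2 - ε with hs
  have hs0 : 0 < s := by rw [hs]; linarith
  set β : ℝ := 4*ε*(1-ε) with hβdef
  have hβ0 : 0 < β := by rw [hβdef]; nlinarith
  have hβ1 : β < 1 := by rw [hβdef]; nlinarith [sq_nonneg (1 - 2*ε)]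
  have hlogβ : Real.log β < 0 := Real.log_neg hβ0 hβ1
  have hδ1 : δ < 1 := by linarith
  have hlogδ : Real.log δ < 0 := Real.log_neg hδ0 hδ1
  set xq : ℝ := Real.log δ / Real.log β with hxq
  have hx0 : 0 ≤ xq := by
    rw [hxq]
    exact le_of_lt (div_pos_of_neg_of_neg hlogδ hlogβ)
  set m : ℕ := ⌈xq⌉₊ with hm
  have hβm : β ^ m ≤ δ := by
    have h1 : (m:ℝ) * Real.log β ≤ xq * Real.log β :=
      mul_le_mul_of_nonpos_right (Nat.le_ceil xq) (le_of_lt hlogβ)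
    have h2 : xq * Real.log β = Real.log δ := by
      rw [hxq, div_mul_cancel₀ _ (ne_of_lt hlogβ)]
    have h3 : Real.log (β ^ m) ≤ Real.log δ := by
      rw [Real.log_pow]; linarith
    exact (Real.log_le_log_iff (pow_pos hβ0 m) hδ0).mp h3
  have hne_δ : (QprtAux.feasSet f δ).Nonempty :=
    QprtAux.feasSet_nonempty f δ (le_of_lt hδ0)
  have hne_ε : (QprtAux.feasSet f ε).Nonempty :=
    QprtAux.feasSet_nonempty f ε (le_of_lt hε0)
  have hq1δ : 1 ≤ qprt f δ := by
    rw [QprtAux.qprt_eq_sInf]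
    exact le_csInf hne_δ fun u hu => QprtAux.one_le_of_mem_feasSet hu
  have hq1ε : 1 ≤ qprt f ε := by
    rw [QprtAux.qprt_eq_sInf]
    exact le_csInf hne_ε fun u hu => QprtAux.one_le_of_mem_feasSet hu
  have hmain : qprt f δ ≤ (qprt f ε) ^ (2*m+1) :=
    QprtAux.qprt_le_pow_inf f ε δ m hε0 (le_of_lt hε2) (by rw [← hβdef]; exact hβm)
  have hlogmain : Real.logb 2 (qprt f δ) ≤ ((2*m+1 : ℕ) : ℝ) * Real.logb 2 (qprt f ε) := by
    calc Real.logb 2 (qprt f δ)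
        ≤ Real.logb 2 ((qprt f ε) ^ (2*m+1)) :=
          Real.logb_le_logb_of_le one_lt_two (by linarith) hmain
      _ = ((2*m+1 : ℕ) : ℝ) * Real.logb 2 (qprt f ε) := Real.logb_pow _ _ _
  have hL0 : 0 ≤ Real.logb 2 (qprt f ε) := Real.logb_nonneg one_lt_two hq1ε
  have h2δ : (2:ℝ) ≤ 1/δ := by
    rw [le_div_iff₀ hδ0]; linarith
  have hlb1 : (1:ℝ) ≤ Real.logb 2 (1/δ) := by
    calc (1:ℝ) = Real.logb 2 2 := (Real.logb_self_eq_one one_lt_two).symm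
      _ ≤ Real.logb 2 (1/δ) := Real.logb_le_logb_of_le one_lt_two two_pos h2δ
  have hlog_le : Real.log (1/δ) ≤ Real.logb 2 (1/δ) := by
    rw [Real.logb, le_div_iff₀ (Real.log_pos one_lt_two)]
    have hlog2 : Real.log 2 ≤ 1 := by
      have := Real.log_le_sub_one_of_pos (show (0:ℝ) < 2 by norm_num)
      linarith
    exact mul_le_of_le_one_right (Real.log_nonneg (by linarith)) hlog2
  have h4s : 4*s^2 ≤ -Real.log β := by
    have h := Real.log_le_sub_one_of_pos hβ0
    have : β - 1 = -(4*s^2) := by rw [hβdef, hs]; ring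
    linarith
  have hxq_mul : xq * (4*s^2) ≤ Real.log (1/δ) := by
    have hlog1δ : Real.log (1/δ) = - Real.log δ := by
      rw [one_div, Real.log_inv]
    have h1 : xq * (4*s^2) ≤ xq * (-Real.log β) :=
      mul_le_mul_of_nonneg_left h4s hx0
    have h2 : xq * (-Real.log β) = - Real.log δ := by
      rw [hxq, mul_neg, div_mul_cancel₀ _ (ne_of_lt hlogβ)]
    rw [hlog1δ]; linarith
  have hk : ((2*m+1 : ℕ) : ℝ) ≤ 2 * (1 / s^2) * Real.logb 2 (1/δ) := by
    have hm1 : (m:ℝ) ≤ xq + 1 := le_of_lt (Nat.ceil_lt_add_one hx0)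
    have hs2 : s^2 ≤ 1/4 := by rw [hs]; nlinarith
    rw [show 2 * (1/s^2) * Real.logb 2 (1/δ) = 2 * Real.logb 2 (1/δ) / s^2 by ring,
      le_div_iff₀ (by positivity)]
    push_cast
    nlinarith [hxq_mul, hlog_le, hlb1, hs2, hm1, hx0, sq_nonneg s]
  calc Real.logb 2 (qprt f δ)
      ≤ ((2*m+1 : ℕ) : ℝ) * Real.logb 2 (qprt f ε) := hlogmain
    _ ≤ (2 * (1 / s^2) * Real.logb 2 (1/δ)) * Real.logb 2 (qprt f ε) :=
        mul_le_mul_of_nonneg_right hk hL0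
    _ = 2 * (1 / (0.5 - ε) ^ 2) * Real.logb 2 (1 / δ) * Real.logb 2 (qprt f ε) := by
        rw [hs]; norm_num
end

section
/- Let δ > 0, let f : {0,1}^n → {0,1}, and let μ be a bit-wise product distribution on {0,1}^n that is (α₀, β₀, α₁, β₁, a, b)-feasible for f. Then there exists a deterministic decision tree for f of depth at most a·b whose error probability under μ is at most 1/4 + α₁ + β₁ + 4b(β₁ + δ) + β₀/((1−α₀)δ) (assuming α₀ < 1). -/
open scoped BigOperators
open scoped Classical

/-!
Build the tree in at most `b` rounds. At a node `ρ` (a partial assignment) whose `0`-mass is at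
most a quarter of its mass, output `1`. Otherwise pick a cube `A` of `u`, query all coordinates of
`A` still free at `ρ` (at most `a` queries) and recurse; when the rounds are used up, output `0`.

A cube `B` of `w` escapes `A` at `ρ` if the two share no free coordinate; every other cube loses a
free coordinate when `A` is queried. Hence, if the escaping `1`-mass of each chosen `A` is at most
`c μ(ρ)`, the error below `ρ` with `k` rounds left is at most `(1/4 + β₁ + k c) μ(ρ)`, plus the
`1`-mass of `ρ` not covered by `w`, plus the `w`-weighted `1`-mass of the cubes with more than `k`
free coordinates. The term `β₁ μ(ρ)` pays, in the last round, for the cubes of `w` fixed by `ρ`: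
as `ρ` contains zeros, their total weight is at most `β₁`.

Since `μ` is a product distribution, escaping cubes are independent inside `ρ`, and averaging over
`A` with weights `u A · μ(ρ ∩ A)` gives `c = β₁ + 4β₀/(1-α₀)`. At the root the error is thus at
most `1/4 + α₁ + β₁ + b c`, which is below the claimed bound if `4bδ < 1`; otherwise the claimed
bound exceeds `1`.
-/

open Finset

lemma lt_card_sdiff_imp {α : Type*} [DecidableEq α] {s t : Finset α} {k : ℕ}
    (h : k < (s \ t).card) : k + 1 < s.card ∨ Disjoint t s := by
  by_cases hd : Disjoint t s
  · exact Or.inr hd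
  obtain ⟨i, hit, his⟩ := not_disjoint_iff.1 hd
  have : (s \ t).card < s.card :=
    card_lt_card ⟨sdiff_subset, fun hs => (mem_sdiff.1 (hs his)).2 hit⟩
  exact Or.inl (by omega)

lemma exists_pos_le_of_sum_mul_le {ι : Type*} [Fintype ι] {ν g : ι → ℝ} {C : ℝ}
    (hν : ∀ i, 0 ≤ ν i) (hpos : 0 < ∑ i, ν i) (h : ∑ i, ν i * g i ≤ C * ∑ i, ν i) :
    ∃ i, 0 < ν i ∧ g i ≤ C := by
  by_contra! hno
  obtain ⟨j, -, hj⟩ := exists_lt_of_sum_lt (by simpa using hpos : ∑ _i : ι, (0 : ℝ) < ∑ i, ν i)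
  refine h.not_gt ?_
  rw [mul_sum]
  refine sum_lt_sum (fun i _ => ?_) ⟨j, mem_univ j, by nlinarith [hno j hj]⟩
  rcases (hν i).eq_or_lt with h0 | h0
  · simp [← h0]
  · nlinarith [hno i h0]

lemma sum_inter_mul_sum_inter {β : Type*} [DecidableEq β] (g : β → ℝ) {R S T : Finset β}
    (h : R ⊆ S ∨ Disjoint R S ∨ R ⊆ T ∨ Disjoint R T) :
    (∑ b ∈ R ∩ S, g b) * ∑ b ∈ R ∩ T, g b = (∑ b ∈ R, g b) * ∑ b ∈ R ∩ S ∩ T, g b := by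
  rcases h with h | h | h | h
  · rw [inter_eq_left.2 h]
  · rw [disjoint_iff_inter_eq_empty.1 h]; simp
  · rw [inter_eq_left.2 h, inter_assoc, inter_comm S, ← inter_assoc, inter_eq_left.2 h, mul_comm]
  · rw [disjoint_iff_inter_eq_empty.1 h, inter_assoc, inter_comm S, ← inter_assoc,
      disjoint_iff_inter_eq_empty.1 h]
    simp

/-- Conditional independence of boxes under a product weight. -/
lemma sum_piFinset_inter_mul {ι : Type*} [Fintype ι] [DecidableEq ι] {β : ι → Type*}
    [∀ i, DecidableEq (β i)] (q : ∀ i, β i → ℝ) (R S T : ∀ i, Finset (β i))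
    (h : ∀ i, R i ⊆ S i ∨ Disjoint (R i) (S i) ∨ R i ⊆ T i ∨ Disjoint (R i) (T i)) :
    (∑ x ∈ Fintype.piFinset R ∩ Fintype.piFinset S, ∏ i, q i (x i))
        * ∑ x ∈ Fintype.piFinset R ∩ Fintype.piFinset T, ∏ i, q i (x i)
      = (∑ x ∈ Fintype.piFinset R, ∏ i, q i (x i))
        * ∑ x ∈ Fintype.piFinset R ∩ Fintype.piFinset S ∩ Fintype.piFinset T,
            ∏ i, q i (x i) := by
  simp only [← Fintype.piFinset_inter, ← prod_univ_sum, ← prod_mul_distrib]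
  exact prod_congr rfl fun i _ => sum_inter_mul_sum_inter (q i) (h i)

lemma le_error_bound {E α₀ α₁ β₀ β₁ δ : ℝ} {b : ℕ} (hδ : 0 < δ) (hα₀ : α₀ < 1) (hβ₀ : 0 ≤ β₀)
    (hα₁ : 0 ≤ α₁) (hβ₁ : 0 ≤ β₁) (hE₁ : E ≤ 1)
    (hE : E ≤ 1 / 4 + α₁ + β₁ + b * (β₁ + 4 * β₀ / (1 - α₀))) :
    E ≤ 1 / 4 + α₁ + β₁ + 4 * (b : ℝ) * (β₁ + δ) + β₀ / ((1 - α₀) * δ) := by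
  have hα : 0 < 1 - α₀ := by linarith
  have hX : 0 ≤ β₀ / ((1 - α₀) * δ) := by positivity
  have hb : (0 : ℝ) ≤ b := b.cast_nonneg
  by_cases hsmall : 4 * (b : ℝ) * δ < 1
  · have : (b : ℝ) * (4 * β₀ / (1 - α₀)) = 4 * b * δ * (β₀ / ((1 - α₀) * δ)) := by
      field_simp
    nlinarith
  · nlinarith

section Subcubes

variable {n : ℕ}

def coordSet : Option Bool → Finset Bool
  | none => univ
  | some b => {b}

def cubePoints (A : Subcube n) : Finset (Fin n → Bool) :=
  Fintype.piFinset fun i => coordSet (A i)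

def fullCube : Subcube n := fun _ => none

lemma mem_cubePoints {A : Subcube n} {x : Fin n → Bool} : x ∈ cubePoints A ↔ memCube A x := by
  simp only [cubePoints, Fintype.mem_piFinset, memCube]
  refine forall_congr' fun i => ?_
  cases A i with
  | none => simp [coordSet]
  | some b =>
    simp only [coordSet, mem_singleton, Option.some.injEq]
    exact ⟨fun h _ hb => hb ▸ h, fun h => h b rfl⟩

@[simp]
lemma cubePoints_fullCube : cubePoints (fullCube : Subcube n) = univ :=
  Fintype.piFinset_univ

def freeSupport (ρ A : Subcube n) : Finset (Fin n) :=
  univ.filter fun i => ρ i = none ∧ (A i).isSome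

lemma card_freeSupport_le (ρ A : Subcube n) : (freeSupport ρ A).card ≤ cubeSize A :=
  card_le_card fun i hi => by
    simp only [freeSupport, mem_filter] at hi ⊢
    exact ⟨hi.1, hi.2.2⟩

@[simp]
lemma freeSupport_fullCube (A : Subcube n) : (freeSupport fullCube A).card = cubeSize A := by
  simp [freeSupport, fullCube, cubeSize]

lemma memCube_iff_of_freeSupport_eq_empty {ρ B : Subcube n} (hB : freeSupport ρ B = ∅)
    {x y : Fin n → Bool} (hx : memCube ρ x) (hy : memCube ρ y) : memCube B x ↔ memCube B y := by
  have key : ∀ i b, B i = some b → x i = y i := fun i b hib => by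
    cases hρ : ρ i with
    | none =>
      have hi : i ∈ freeSupport ρ B := by simp [freeSupport, hρ, hib]
      simp [hB] at hi
    | some r => rw [hx i r hρ, hy i r hρ]
  exact ⟨fun h i b hib => key i b hib ▸ h i b hib, fun h i b hib => (key i b hib).symm ▸ h i b hib⟩

def fixOn (l : List (Fin n)) (ρ : Subcube n) (x : Fin n → Bool) : Subcube n :=
  fun j => if j ∈ l then some (x j) else ρ j

lemma fixOn_cons (i : Fin n) (l : List (Fin n)) (ρ : Subcube n) (x : Fin n → Bool) :
    fixOn (i :: l) ρ x = fixOn l (Function.update ρ i (some (x i))) x := by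
  funext j
  by_cases hj : j = i
  · subst hj; simp [fixOn]
  · simp [fixOn, hj]

lemma freeSupport_fixOn (l : List (Fin n)) (ρ B : Subcube n) (x : Fin n → Bool) :
    freeSupport (fixOn l ρ x) B = freeSupport ρ B \ l.toFinset := by
  ext i
  rw [freeSupport, freeSupport, mem_sdiff, mem_filter, mem_filter, List.mem_toFinset]
  by_cases hi : i ∈ l <;> simp [fixOn, hi]

lemma fiber_fixOn {l : List (Fin n)} {ρ : Subcube n} {x : Fin n → Bool}
    (hx : x ∈ cubePoints ρ) :
    {y ∈ cubePoints ρ | fixOn l ρ y = fixOn l ρ x} = cubePoints (fixOn l ρ x) := by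
  ext y
  simp only [mem_filter, mem_cubePoints] at hx ⊢
  constructor
  · rintro ⟨hy, hxy⟩
    rw [← hxy]
    intro j b hb
    by_cases hj : j ∈ l
    · simpa [fixOn, hj] using hb
    · exact hy j b (by simpa [fixOn, hj] using hb)
  · intro hy
    refine ⟨fun j b hb => ?_, funext fun j => ?_⟩
    · by_cases hj : j ∈ l
      · rw [← hx j b hb]; exact hy j _ (by simp [fixOn, hj])
      · exact hy j b (by simp [fixOn, hj, hb])
    · by_cases hj : j ∈ l
      · simp [fixOn, hj, hy j (x j) (by simp [fixOn, hj])]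
      · simp [fixOn, hj]

def queryAll : List (Fin n) → Subcube n → (Subcube n → DTree n) → DTree n
  | [], ρ, c => c ρ
  | i :: l, ρ, c => .node i (queryAll l (Function.update ρ i (some false)) c)
      (queryAll l (Function.update ρ i (some true)) c)

lemma eval_queryAll (c : Subcube n → DTree n) (x : Fin n → Bool) (l : List (Fin n))
    (ρ : Subcube n) : (queryAll l ρ c).eval x = (c (fixOn l ρ x)).eval x := by
  induction l generalizing ρ with
  | nil => rfl
  | cons i l ih =>
    rw [fixOn_cons, ← ih]
    cases h : x i <;> simp [queryAll, DTree.eval, h]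

lemma depth_queryAll {c : Subcube n → DTree n} {D : ℕ} (hc : ∀ ρ, (c ρ).depth ≤ D)
    (l : List (Fin n)) (ρ : Subcube n) : (queryAll l ρ c).depth ≤ l.length + D := by
  induction l generalizing ρ with
  | nil => simpa [queryAll] using hc ρ
  | cons i l ih =>
    have h0 := ih (Function.update ρ i (some false))
    have h1 := ih (Function.update ρ i (some true))
    simp only [queryAll, DTree.depth, List.length_cons]
    omega

def childCubes (l : List (Fin n)) (ρ : Subcube n) : Finset (Subcube n) :=
  (cubePoints ρ).image (fixOn l ρ)

lemma fixOn_eq_of_mem_childCubes {l : List (Fin n)} {ρ ρ' : Subcube n}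
    (hρ' : ρ' ∈ childCubes l ρ) {x : Fin n → Bool} (hx : x ∈ cubePoints ρ') :
    fixOn l ρ x = ρ' := by
  obtain ⟨x₀, hx₀, rfl⟩ := mem_image.1 hρ'
  rw [← fiber_fixOn hx₀] at hx
  exact (mem_filter.1 hx).2

lemma sum_cubePoints_eq_sum_childCubes (l : List (Fin n)) (ρ : Subcube n)
    (h : (Fin n → Bool) → ℝ) :
    ∑ x ∈ cubePoints ρ, h x = ∑ ρ' ∈ childCubes l ρ, ∑ x ∈ cubePoints ρ', h x :=
  (sum_image' h fun _ hx => by rw [fiber_fixOn hx]).symm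

lemma sum_inter_cubePoints_eq_sum_childCubes (l : List (Fin n)) (ρ B : Subcube n)
    (h : (Fin n → Bool) → ℝ) :
    ∑ x ∈ cubePoints ρ ∩ cubePoints B, h x
      = ∑ ρ' ∈ childCubes l ρ, ∑ x ∈ cubePoints ρ' ∩ cubePoints B, h x := by
  simp only [← sum_ite_mem]
  exact sum_cubePoints_eq_sum_childCubes l ρ _

lemma sum_mul_sum_inter_cubePoints (v : Subcube n → ℝ) (S : Finset (Fin n → Bool))
    (h : (Fin n → Bool) → ℝ) :
    ∑ A, v A * ∑ x ∈ S ∩ cubePoints A, h x = ∑ x ∈ S, h x * cubeCov v x := by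
  simp only [← sum_ite_mem, mul_sum, cubeCov, mem_cubePoints]
  rw [sum_comm]
  refine sum_congr rfl fun x _ => sum_congr rfl fun A _ => ?_
  split_ifs <;> ring

end Subcubes

section ProductWeights

variable {n : ℕ} {p : Fin n → ℝ}

lemma bitProd_nonneg (hp : ∀ i, 0 ≤ p i ∧ p i ≤ 1) (x : Fin n → Bool) : 0 ≤ bitProd p x :=
  prod_nonneg fun i _ => by
    cases x i
    · exact sub_nonneg.2 (hp i).2
    · exact (hp i).1

lemma sum_bitProd (p : Fin n → ℝ) : ∑ x, bitProd p x = 1 :=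
  calc ∑ x, bitProd p x = ∏ i, ∑ b : Bool, if b then p i else 1 - p i :=
      (Fintype.prod_sum fun i (b : Bool) => if b then p i else 1 - p i).symm
    _ = 1 := by simp

lemma coordSet_cases (r a b : Option Bool) (h : ¬(r = none ∧ a.isSome ∧ b.isSome)) :
    coordSet r ⊆ coordSet a ∨ Disjoint (coordSet r) (coordSet a)
      ∨ coordSet r ⊆ coordSet b ∨ Disjoint (coordSet r) (coordSet b) := by
  rcases r with _ | r
  · rcases a with _ | a
    · exact Or.inl (subset_univ _)
    rcases b with _ | b
    · exact Or.inr (Or.inr (Or.inl (subset_univ _)))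
    simp at h
  · simp only [coordSet, singleton_subset_iff, disjoint_singleton_left]
    exact (em _).imp id Or.inl

lemma bitProd_inter_mul {ρ A B : Subcube n}
    (h : Disjoint (freeSupport ρ A) (freeSupport ρ B)) :
    (∑ x ∈ cubePoints ρ ∩ cubePoints A, bitProd p x)
        * ∑ x ∈ cubePoints ρ ∩ cubePoints B, bitProd p x
      = (∑ x ∈ cubePoints ρ, bitProd p x)
        * ∑ x ∈ cubePoints ρ ∩ cubePoints A ∩ cubePoints B, bitProd p x :=
  sum_piFinset_inter_mul (fun i b => if b then p i else 1 - p i) (fun i => coordSet (ρ i))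
    (fun i => coordSet (A i)) (fun i => coordSet (B i)) fun i =>
    coordSet_cases _ _ _ fun ⟨hρ, hA, hB⟩ => disjoint_left.1 h
      (by simp [freeSupport, hρ, hA] : i ∈ freeSupport ρ A) (by simp [freeSupport, hρ, hB])

end ProductWeights

section Tree

variable {n : ℕ} (μ : (Fin n → Bool) → ℝ) (f : (Fin n → Bool) → Bool) (w : Subcube n → ℝ)

def fiberWeight (z : Bool) (x : Fin n → Bool) : ℝ := if f x = z then μ x else 0

noncomputable def escapeMass (ρ A : Subcube n) : ℝ :=
  ∑ B, if Disjoint (freeSupport ρ A) (freeSupport ρ B) then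
    w B * ∑ x ∈ cubePoints ρ ∩ cubePoints B, fiberWeight μ f true x else 0

noncomputable def orphanMass (k : ℕ) (ρ : Subcube n) : ℝ :=
  ∑ B, if k < (freeSupport ρ B).card then
    w B * ∑ x ∈ cubePoints ρ ∩ cubePoints B, fiberWeight μ f true x else 0

noncomputable def uncoveredMass (ρ : Subcube n) : ℝ :=
  ∑ x ∈ cubePoints ρ, fiberWeight μ f true x * (1 - cubeCov w x)

def nodeError (ρ : Subcube n) (T : DTree n) : ℝ :=
  ∑ x ∈ cubePoints ρ, if T.eval x ≠ f x then μ x else 0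

def FewZeros (ρ : Subcube n) : Prop :=
  4 * ∑ x ∈ cubePoints ρ, fiberWeight μ f false x ≤ ∑ x ∈ cubePoints ρ, μ x

noncomputable def buildTree (sel : Subcube n → Subcube n) : ℕ → Subcube n → DTree n
  | 0, ρ => if FewZeros μ f ρ then .leaf true else .leaf false
  | k + 1, ρ => if FewZeros μ f ρ then .leaf true
      else queryAll (freeSupport ρ (sel ρ)).toList ρ (buildTree sel k)

variable {μ f w}

lemma depth_buildTree {a : ℕ} {sel : Subcube n → Subcube n} (hsel : ∀ ρ, cubeSize (sel ρ) ≤ a)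
    (k : ℕ) (ρ : Subcube n) : (buildTree μ f sel k ρ).depth ≤ k * a := by
  induction k generalizing ρ with
  | zero => rw [buildTree]; split_ifs <;> simp [DTree.depth]
  | succ k ih =>
    rw [buildTree]
    split_ifs
    · simp [DTree.depth]
    · refine (depth_queryAll ih _ ρ).trans ?_
      rw [length_toList, Nat.succ_mul, add_comm]
      exact Nat.add_le_add_left ((card_freeSupport_le ρ _).trans (hsel ρ)) _

lemma fiberWeight_nonneg (hμ : ∀ x, 0 ≤ μ x) (z : Bool) (x : Fin n → Bool) :
    0 ≤ fiberWeight μ f z x := by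
  unfold fiberWeight; split_ifs <;> simp [hμ x]

lemma fiberWeight_le (hμ : ∀ x, 0 ≤ μ x) (z : Bool) (x : Fin n → Bool) :
    fiberWeight μ f z x ≤ μ x := by
  unfold fiberWeight; split_ifs <;> simp [hμ x]

lemma cubeCov_nonneg {v : Subcube n → ℝ} (hv : ∀ A, 0 ≤ v A) (x : Fin n → Bool) :
    0 ≤ cubeCov v x :=
  sum_nonneg fun A _ => by split_ifs <;> simp [hv A]

lemma uncoveredMass_nonneg (hμ : ∀ x, 0 ≤ μ x) (hone : ∀ x, cubeCov w x ≤ 1) (ρ : Subcube n) :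
    0 ≤ uncoveredMass μ f w ρ :=
  sum_nonneg fun x _ => mul_nonneg (fiberWeight_nonneg hμ _ x) (sub_nonneg.2 (hone x))

lemma orphanMass_nonneg (hμ : ∀ x, 0 ≤ μ x) (hw : ∀ A, 0 ≤ w A) (k : ℕ) (ρ : Subcube n) :
    0 ≤ orphanMass μ f w k ρ :=
  sum_nonneg fun B _ => by
    split_ifs
    · exact mul_nonneg (hw B) (sum_nonneg fun x _ => fiberWeight_nonneg hμ _ x)
    · rfl

lemma nodeError_leaf (ρ : Subcube n) (z : Bool) :
    nodeError μ f ρ (.leaf z) = ∑ x ∈ cubePoints ρ, fiberWeight μ f (!z) x :=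
  sum_congr rfl fun x _ => by cases hf : f x <;> cases z <;> simp [DTree.eval, fiberWeight, hf]

lemma nodeError_queryAll (l : List (Fin n)) (ρ : Subcube n) (c : Subcube n → DTree n) :
    nodeError μ f ρ (queryAll l ρ c) = ∑ ρ' ∈ childCubes l ρ, nodeError μ f ρ' (c ρ') := by
  rw [nodeError, sum_cubePoints_eq_sum_childCubes l]
  refine sum_congr rfl fun ρ' hρ' => sum_congr rfl fun x hx => ?_
  rw [eval_queryAll, fixOn_eq_of_mem_childCubes hρ' hx]

lemma exists_zero_of_not_fewZeros (hμ : ∀ x, 0 ≤ μ x) {ρ : Subcube n} (h : ¬FewZeros μ f ρ) :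
    ∃ x ∈ cubePoints ρ, f x = false := by
  by_contra! hno
  refine h ?_
  rw [FewZeros, sum_eq_zero fun x hx => by simp [fiberWeight, hno x hx]]
  simpa using sum_nonneg fun x _ => hμ x

/-- A cube with no free coordinate at `ρ` either contains `ρ` or misses it. -/
lemma sum_fiberWeight_true_le (hμ : ∀ x, 0 ≤ μ x) (hw : ∀ A, 0 ≤ w A) {ρ : Subcube n}
    {x₀ : Fin n → Bool} (hx₀ : x₀ ∈ cubePoints ρ) :
    ∑ x ∈ cubePoints ρ, fiberWeight μ f true x
      ≤ uncoveredMass μ f w ρ + cubeCov w x₀ * ∑ x ∈ cubePoints ρ, μ x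
        + orphanMass μ f w 0 ρ := by
  have hsplit : ∑ x ∈ cubePoints ρ, fiberWeight μ f true x = uncoveredMass μ f w ρ
      + ∑ B, w B * ∑ x ∈ cubePoints ρ ∩ cubePoints B, fiberWeight μ f true x := by
    rw [uncoveredMass, sum_mul_sum_inter_cubePoints, ← sum_add_distrib]
    exact sum_congr rfl fun x _ => by ring
  have hcube : ∀ B, w B * ∑ x ∈ cubePoints ρ ∩ cubePoints B, fiberWeight μ f true x
      ≤ (if memCube B x₀ then w B else 0) * ∑ x ∈ cubePoints ρ, μ x
        + if 0 < (freeSupport ρ B).card then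
            w B * ∑ x ∈ cubePoints ρ ∩ cubePoints B, fiberWeight μ f true x else 0 := by
    intro B
    have hρ : 0 ≤ ∑ x ∈ cubePoints ρ, μ x := sum_nonneg fun x _ => hμ x
    split_ifs with hB hfree hfree
    · nlinarith [hw B]
    · rw [add_zero]
      refine mul_le_mul_of_nonneg_left ?_ (hw B)
      calc ∑ x ∈ cubePoints ρ ∩ cubePoints B, fiberWeight μ f true x
          ≤ ∑ x ∈ cubePoints ρ ∩ cubePoints B, μ x :=
            sum_le_sum fun x _ => fiberWeight_le hμ _ x
        _ ≤ ∑ x ∈ cubePoints ρ, μ x :=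
            sum_le_sum_of_subset_of_nonneg inter_subset_left fun x _ _ => hμ x
    · simp
    · have hempty : cubePoints ρ ∩ cubePoints B = ∅ := by
        refine eq_empty_of_forall_notMem fun x hx => hB ?_
        rw [mem_inter, mem_cubePoints, mem_cubePoints] at hx
        exact (memCube_iff_of_freeSupport_eq_empty (card_eq_zero.1 (by omega)) hx.1
          (mem_cubePoints.1 hx₀)).1 hx.2
      simp [hempty]
  calc ∑ x ∈ cubePoints ρ, fiberWeight μ f true x
      ≤ uncoveredMass μ f w ρ + ∑ B, ((if memCube B x₀ then w B else 0)
          * ∑ x ∈ cubePoints ρ, μ x + if 0 < (freeSupport ρ B).card then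
            w B * ∑ x ∈ cubePoints ρ ∩ cubePoints B, fiberWeight μ f true x else 0) := by
        rw [hsplit]; gcongr with B; exact hcube B
    _ = _ := by rw [sum_add_distrib, ← sum_mul, add_assoc]; rfl

lemma sum_orphanMass_childCubes_le (hμ : ∀ x, 0 ≤ μ x) (hw : ∀ A, 0 ≤ w A) (k : ℕ)
    (ρ A : Subcube n) :
    ∑ ρ' ∈ childCubes (freeSupport ρ A).toList ρ, orphanMass μ f w k ρ'
      ≤ orphanMass μ f w (k + 1) ρ + escapeMass μ f w ρ A := by
  set L := freeSupport ρ A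
  have hfree : ∀ ρ' ∈ childCubes L.toList ρ, ∀ B, freeSupport ρ' B = freeSupport ρ B \ L := by
    intro ρ' hρ' B
    obtain ⟨x, _, rfl⟩ := mem_image.1 hρ'
    rw [freeSupport_fixOn, toList_toFinset]
  calc ∑ ρ' ∈ childCubes L.toList ρ, orphanMass μ f w k ρ'
      = ∑ B, if k < (freeSupport ρ B \ L).card then
          w B * ∑ x ∈ cubePoints ρ ∩ cubePoints B, fiberWeight μ f true x else 0 := by
        unfold orphanMass
        rw [sum_comm]
        refine sum_congr rfl fun B _ => ?_
        rw [sum_congr rfl fun ρ' hρ' => by rw [hfree ρ' hρ' B]]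
        by_cases hk : k < (freeSupport ρ B \ L).card
        · simp only [hk, if_true]
          rw [← mul_sum, ← sum_inter_cubePoints_eq_sum_childCubes]
        · simp only [hk, if_false, sum_const_zero]
    _ ≤ ∑ B, ((if k + 1 < (freeSupport ρ B).card then
            w B * ∑ x ∈ cubePoints ρ ∩ cubePoints B, fiberWeight μ f true x else 0)
          + if Disjoint L (freeSupport ρ B) then
            w B * ∑ x ∈ cubePoints ρ ∩ cubePoints B, fiberWeight μ f true x else 0) := by
        refine sum_le_sum fun B _ => ?_
        have hB : 0 ≤ w B * ∑ x ∈ cubePoints ρ ∩ cubePoints B, fiberWeight μ f true x :=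
          mul_nonneg (hw B) (sum_nonneg fun x _ => fiberWeight_nonneg hμ _ x)
        split_ifs with hk h1 h2 h2 <;>
          first | linarith | exact absurd (lt_card_sdiff_imp hk) (by tauto)
    _ = orphanMass μ f w (k + 1) ρ + escapeMass μ f w ρ A := sum_add_distrib

theorem nodeError_buildTree_le (hμ : ∀ x, 0 ≤ μ x) (hw : ∀ A, 0 ≤ w A)
    (hone : ∀ x, cubeCov w x ≤ 1) {β₁ c : ℝ} (hβ₁ : 0 ≤ β₁)
    (hpack : ∀ x, f x = false → cubeCov w x ≤ β₁) (hc : 0 ≤ c) {sel : Subcube n → Subcube n}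
    (hsel : ∀ ρ, ¬FewZeros μ f ρ → escapeMass μ f w ρ (sel ρ) ≤ c * ∑ x ∈ cubePoints ρ, μ x)
    (k : ℕ) (ρ : Subcube n) :
    nodeError μ f ρ (buildTree μ f sel k ρ)
      ≤ (1 / 4 + β₁ + k * c) * ∑ x ∈ cubePoints ρ, μ x + uncoveredMass μ f w ρ
        + orphanMass μ f w k ρ := by
  have hmass : ∀ ρ : Subcube n, 0 ≤ ∑ x ∈ cubePoints ρ, μ x := fun ρ => sum_nonneg fun x _ => hμ x
  have hfew : ∀ k ρ, FewZeros μ f ρ → nodeError μ f ρ (.leaf true)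
      ≤ (1 / 4 + β₁ + k * c) * ∑ x ∈ cubePoints ρ, μ x + uncoveredMass μ f w ρ
        + orphanMass μ f w k ρ := fun k ρ h => by
    rw [nodeError_leaf, Bool.not_true]
    have := mul_nonneg (add_nonneg hβ₁ (mul_nonneg k.cast_nonneg hc)) (hmass ρ)
    linarith [uncoveredMass_nonneg (f := f) hμ hone ρ, orphanMass_nonneg (f := f) hμ hw k ρ,
      show (4 : ℝ) * _ ≤ _ from h]
  induction k generalizing ρ with
  | zero =>
    rw [buildTree]
    split_ifs with h
    · exact hfew 0 ρ h
    obtain ⟨x₀, hx₀, hfx₀⟩ := exists_zero_of_not_fewZeros hμ h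
    rw [nodeError_leaf, Bool.not_false, Nat.cast_zero, zero_mul, add_zero]
    have := sum_fiberWeight_true_le (f := f) hμ hw hx₀
    nlinarith [hpack x₀ hfx₀, hmass ρ]
  | succ k ih =>
    rw [buildTree]
    split_ifs with h
    · exact hfew (k + 1) ρ h
    set l := (freeSupport ρ (sel ρ)).toList
    calc nodeError μ f ρ (queryAll l ρ (buildTree μ f sel k))
        ≤ ∑ ρ' ∈ childCubes l ρ, ((1 / 4 + β₁ + k * c) * ∑ x ∈ cubePoints ρ', μ x
            + uncoveredMass μ f w ρ' + orphanMass μ f w k ρ') := by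
          rw [nodeError_queryAll]; exact sum_le_sum fun ρ' _ => ih ρ'
      _ = (1 / 4 + β₁ + k * c) * ∑ x ∈ cubePoints ρ, μ x + uncoveredMass μ f w ρ
            + ∑ ρ' ∈ childCubes l ρ, orphanMass μ f w k ρ' := by
          rw [sum_add_distrib, sum_add_distrib, ← mul_sum, uncoveredMass,
            sum_cubePoints_eq_sum_childCubes l ρ μ, sum_cubePoints_eq_sum_childCubes l ρ]
          rfl
      _ ≤ _ := by
          have := sum_orphanMass_childCubes_le (f := f) hμ hw k ρ (sel ρ)
          have := hsel ρ h
          push_cast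
          linarith

end Tree

section CheapQuery

variable {n : ℕ} {μ : (Fin n → Bool) → ℝ} {f : (Fin n → Bool) → Bool} {u w : Subcube n → ℝ}
  {α₀ β₀ β₁ : ℝ}

lemma sum_mul_cubeCov_mul_cubeCov_le (hμ : ∀ x, 0 ≤ μ x) (hu : ∀ A, 0 ≤ u A) (hβ₁ : 0 ≤ β₁)
    (hpack₀ : ∀ x, f x = true → cubeCov u x ≤ β₀) (hone : ∀ x, cubeCov w x ≤ 1)
    (hpack₁ : ∀ x, f x = false → cubeCov w x ≤ β₁) (S : Finset (Fin n → Bool)) :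
    ∑ x ∈ S, μ x * cubeCov u x * cubeCov w x
      ≤ β₁ * ∑ x ∈ S, μ x * cubeCov u x + β₀ * ∑ x ∈ S, fiberWeight μ f true x := by
  rw [mul_sum, mul_sum, ← sum_add_distrib]
  refine sum_le_sum fun x _ => ?_
  have hμu := mul_nonneg (hμ x) (cubeCov_nonneg hu x)
  cases hf : f x
  · simp only [fiberWeight, hf, Bool.false_eq_true, if_false, mul_zero, add_zero]
    nlinarith [hpack₁ x hf]
  · simp only [fiberWeight, hf, if_true]
    nlinarith [hpack₀ x hf, hone x, hμ x]

variable {p : Fin n → ℝ}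

lemma sum_mul_escapeMass_le (hp : ∀ i, 0 ≤ p i ∧ p i ≤ 1) (hu : ∀ A, 0 ≤ u A)
    (hw : ∀ A, 0 ≤ w A) (ρ : Subcube n) :
    ∑ A, u A * (∑ x ∈ cubePoints ρ ∩ cubePoints A, bitProd p x) * escapeMass (bitProd p) f w ρ A
      ≤ (∑ x ∈ cubePoints ρ, bitProd p x)
        * ∑ x ∈ cubePoints ρ, bitProd p x * cubeCov u x * cubeCov w x := by
  have hμ := bitProd_nonneg hp
  have hmass : ∀ S : Finset (Fin n → Bool), 0 ≤ ∑ x ∈ S, bitProd p x :=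
    fun S => sum_nonneg fun x _ => hμ x
  calc ∑ A, u A * (∑ x ∈ cubePoints ρ ∩ cubePoints A, bitProd p x)
          * escapeMass (bitProd p) f w ρ A
      ≤ ∑ A, ∑ B, (∑ x ∈ cubePoints ρ, bitProd p x) * (u A * (w B
          * ∑ x ∈ cubePoints ρ ∩ cubePoints A ∩ cubePoints B, bitProd p x)) := by
        refine sum_le_sum fun A _ => ?_
        rw [escapeMass, mul_sum]
        refine sum_le_sum fun B _ => ?_
        have hAB := mul_nonneg (hu A) (hw B)
        split_ifs with hesc
        · have hone : ∑ x ∈ cubePoints ρ ∩ cubePoints B, fiberWeight (bitProd p) f true x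
              ≤ ∑ x ∈ cubePoints ρ ∩ cubePoints B, bitProd p x :=
            sum_le_sum fun x _ => fiberWeight_le hμ _ x
          have := bitProd_inter_mul (p := p) hesc
          have := mul_le_mul_of_nonneg_left hone 
            (mul_nonneg hAB (hmass (cubePoints ρ ∩ cubePoints A)))
          nlinarith
        · simp only [mul_zero]
          exact mul_nonneg (hmass _) (mul_nonneg (hu A) (mul_nonneg (hw B) (hmass _)))
    _ = (∑ x ∈ cubePoints ρ, bitProd p x)
        * ∑ x ∈ cubePoints ρ, bitProd p x * cubeCov u x * cubeCov w x := by
        simp only [← mul_sum, sum_mul_sum_inter_cubePoints]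
        congr 1
        exact sum_congr rfl fun x _ => by ring

lemma exists_cheap_query (hp : ∀ i, 0 ≤ p i ∧ p i ≤ 1) (hα₀ : α₀ < 1) (hβ₀ : 0 ≤ β₀)
    (hβ₁ : 0 ≤ β₁) (hu : ∀ A, 0 ≤ u A) (hw : ∀ A, 0 ≤ w A)
    (hcov₀ : ∀ x, f x = false → 1 - α₀ ≤ cubeCov u x)
    (hpack₀ : ∀ x, f x = true → cubeCov u x ≤ β₀) (hone : ∀ x, cubeCov w x ≤ 1)
    (hpack₁ : ∀ x, f x = false → cubeCov w x ≤ β₁) {ρ : Subcube n}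
    (h : ¬FewZeros (bitProd p) f ρ) :
    ∃ A, u A ≠ 0 ∧ escapeMass (bitProd p) f w ρ A
      ≤ (β₁ + 4 * β₀ / (1 - α₀)) * ∑ x ∈ cubePoints ρ, bitProd p x := by
  have hμ := bitProd_nonneg hp
  set m := ∑ x ∈ cubePoints ρ, bitProd p x
  set m₀ := ∑ x ∈ cubePoints ρ, fiberWeight (bitProd p) f false x
  set m₁ := ∑ x ∈ cubePoints ρ, fiberWeight (bitProd p) f true x
  set N := ∑ A, u A * ∑ x ∈ cubePoints ρ ∩ cubePoints A, bitProd p x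
  have hα : 0 < 1 - α₀ := by linarith
  have hm : 0 ≤ m := sum_nonneg fun x _ => hμ x
  have hm₀ : m < 4 * m₀ := not_le.1 h
  have hm₁ : m₁ ≤ m := sum_le_sum fun x _ => fiberWeight_le hμ _ x
  have hN : N = ∑ x ∈ cubePoints ρ, bitProd p x * cubeCov u x := sum_mul_sum_inter_cubePoints u _ _
  have hN₀ : (1 - α₀) * m₀ ≤ N := by
    rw [hN, mul_sum]
    refine sum_le_sum fun x _ => ?_
    have hux := cubeCov_nonneg hu x
    cases hf : f x
    · simp only [fiberWeight, hf, if_true]; nlinarith [hcov₀ x hf, hμ x]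
    · simp only [fiberWeight, hf, Bool.true_eq_false, if_false, mul_zero]
      exact mul_nonneg (hμ x) hux
  have hNpos : 0 < N := lt_of_lt_of_le (by nlinarith) hN₀
  have hm₁N : m₁ ≤ 4 / (1 - α₀) * N := by
    rw [div_mul_eq_mul_div, le_div_iff₀ hα]; nlinarith
  have hpack := sum_mul_cubeCov_mul_cubeCov_le (f := f) hμ hu hβ₁ hpack₀ hone hpack₁ (cubePoints ρ)
  have key : ∑ A, (u A * ∑ x ∈ cubePoints ρ ∩ cubePoints A, bitProd p x)
        * escapeMass (bitProd p) f w ρ A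
      ≤ (β₁ + 4 * β₀ / (1 - α₀)) * m * N := by
    rw [← hN] at hpack
    have : β₀ * m₁ ≤ 4 * β₀ / (1 - α₀) * N :=
      calc β₀ * m₁ ≤ β₀ * (4 / (1 - α₀) * N) := mul_le_mul_of_nonneg_left hm₁N hβ₀
        _ = 4 * β₀ / (1 - α₀) * N := by ring
    calc _ ≤ m * ∑ x ∈ cubePoints ρ, bitProd p x * cubeCov u x * cubeCov w x :=
          sum_mul_escapeMass_le hp hu hw ρ
      _ ≤ m * ((β₁ + 4 * β₀ / (1 - α₀)) * N) :=
          mul_le_mul_of_nonneg_left (by linarith) hm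
      _ = _ := by ring
  obtain ⟨A, hA, hle⟩ := exists_pos_le_of_sum_mul_le
    (fun A => mul_nonneg (hu A) (sum_nonneg fun x _ => hμ x)) hNpos key
  exact ⟨A, fun h0 => by simp [h0] at hA, hle⟩

lemma exists_query_selector {a : ℕ} (hp : ∀ i, 0 ≤ p i ∧ p i ≤ 1) (hα₀ : α₀ < 1) (hβ₀ : 0 ≤ β₀)
    (hβ₁ : 0 ≤ β₁) (hu : ∀ A, 0 ≤ u A) (hw : ∀ A, 0 ≤ w A)
    (hua : ∀ A, u A ≠ 0 → cubeSize A ≤ a)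
    (hcov₀ : ∀ x, f x = false → 1 - α₀ ≤ cubeCov u x)
    (hpack₀ : ∀ x, f x = true → cubeCov u x ≤ β₀) (hone : ∀ x, cubeCov w x ≤ 1)
    (hpack₁ : ∀ x, f x = false → cubeCov w x ≤ β₁) :
    ∃ sel : Subcube n → Subcube n, (∀ ρ, cubeSize (sel ρ) ≤ a) ∧
      ∀ ρ, ¬FewZeros (bitProd p) f ρ → escapeMass (bitProd p) f w ρ (sel ρ)
        ≤ (β₁ + 4 * β₀ / (1 - α₀)) * ∑ x ∈ cubePoints ρ, bitProd p x := by
  have : ∀ ρ, ∃ A, cubeSize A ≤ a ∧ (¬FewZeros (bitProd p) f ρ → escapeMass (bitProd p) f w ρ A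
      ≤ (β₁ + 4 * β₀ / (1 - α₀)) * ∑ x ∈ cubePoints ρ, bitProd p x) := fun ρ => by
    by_cases h : FewZeros (bitProd p) f ρ
    · exact ⟨fullCube, by simp [cubeSize, fullCube], fun h' => absurd h h'⟩
    · obtain ⟨A, hA, hle⟩ := exists_cheap_query hp hα₀ hβ₀ hβ₁ hu hw hcov₀ hpack₀ hone hpack₁ h
      exact ⟨A, hua A hA, fun _ => hle⟩
  choose sel hsize hcheap using this
  exact ⟨sel, hsize, hcheap⟩

end CheapQuery

section Root

variable {n : ℕ} {μ : (Fin n → Bool) → ℝ} {f : (Fin n → Bool) → Bool} {w : Subcube n → ℝ}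

lemma nodeError_fullCube (T : DTree n) : nodeError μ f fullCube T = qErr μ f T := by
  rw [nodeError, cubePoints_fullCube]; rfl

lemma orphanMass_fullCube {b : ℕ} (hwb : ∀ A, w A ≠ 0 → cubeSize A ≤ b) :
    orphanMass μ f w b fullCube = 0 :=
  sum_eq_zero fun B _ => by
    split_ifs with h
    · rw [freeSupport_fullCube] at h
      rw [not_imp_comm.1 (hwb B) (by omega), zero_mul]
    · rfl

lemma uncoveredMass_fullCube_le (hμ : ∀ x, 0 ≤ μ x) {α₁ : ℝ} (hα₁ : 0 ≤ α₁)
    (hμ₁ : ∑ x, μ x = 1)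
    (hcov : (1 - α₁) * qTotalZ μ f true ≤ ∑ A, cubeMassZ μ f true A * w A) :
    uncoveredMass μ f w fullCube ≤ α₁ := by
  have hcubes : ∑ A, cubeMassZ μ f true A * w A = ∑ x, fiberWeight μ f true x * cubeCov w x := by
    rw [← sum_mul_sum_inter_cubePoints]
    refine sum_congr rfl fun A _ => ?_
    rw [mul_comm, ← sum_ite_mem]
    congr 1
    exact sum_congr rfl fun x _ => by simp [fiberWeight, mem_cubePoints, ite_and]
  have htotal : qTotalZ μ f true ≤ 1 :=
    hμ₁ ▸ sum_le_sum fun x _ => fiberWeight_le hμ true x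
  have : uncoveredMass μ f w fullCube = qTotalZ μ f true - ∑ A, cubeMassZ μ f true A * w A := by
    rw [hcubes, uncoveredMass, cubePoints_fullCube, qTotalZ, ← sum_sub_distrib]
    exact sum_congr rfl fun x _ => by rw [fiberWeight]; ring
  nlinarith

lemma qErr_le_one (hμ : ∀ x, 0 ≤ μ x) (hμ₁ : ∑ x, μ x = 1) (T : DTree n) : qErr μ f T ≤ 1 :=
  hμ₁ ▸ sum_le_sum fun x _ => by split_ifs <;> simp [hμ x]

end Root

theorem feasible_implies_dtree_general {n : ℕ} (δ : ℝ) (hδ : 0 < δ)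
    (f : (Fin n → Bool) → Bool) (p : Fin n → ℝ) (hp : ∀ i, 0 ≤ p i ∧ p i ≤ 1)
    (α0 β0 α1 β1 : ℝ) (hα0' : α0 < 1)
    (hβ0 : 0 ≤ β0) (hα1 : 0 ≤ α1) (hβ1 : 0 ≤ β1)
    (a b : ℕ)
    (u w : Subcube n → ℝ) (hu0 : ∀ A, 0 ≤ u A) (hw0 : ∀ A, 0 ≤ w A)
    (hua : ∀ A, u A ≠ 0 → cubeSize A ≤ a)
    (hwb : ∀ A, w A ≠ 0 → cubeSize A ≤ b)
    (hcov0 : ∀ x, f x = false → 1 - α0 ≤ cubeCov u x)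
    (hpack0 : ∀ x, f x = true → cubeCov u x ≤ β0)
    (hcov1 : (1 - α1) * qTotalZ (bitProd p) f true ≤
      ∑ A : Subcube n, cubeMassZ (bitProd p) f true A * w A)
    (hone1 : ∀ x, cubeCov w x ≤ 1)
    (hpack1 : ∀ x, f x = false → cubeCov w x ≤ β1) :
    ∃ T : DTree n, T.depth ≤ a * b ∧
      qErr (bitProd p) f T ≤
        1 / 4 + α1 + β1 + 4 * (b : ℝ) * (β1 + δ) + β0 / ((1 - α0) * δ) := by
  have hμ := bitProd_nonneg hp
  have hc : 0 ≤ β1 + 4 * β0 / (1 - α0) := add_nonneg hβ1 (div_nonneg (by linarith) (by linarith))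
  obtain ⟨sel, hsize, hcheap⟩ :=
    exists_query_selector hp hα0' hβ0 hβ1 hu0 hw0 hua hcov0 hpack0 hone1 hpack1
  refine ⟨buildTree (bitProd p) f sel b fullCube,
    (depth_buildTree hsize b _).trans (Nat.mul_comm b a).le, ?_⟩
  have hroot := nodeError_buildTree_le hμ hw0 hone1 hβ1 hpack1 hc hcheap b fullCube
  rw [nodeError_fullCube, cubePoints_fullCube, sum_bitProd, orphanMass_fullCube hwb] at hroot
  have huncov := uncoveredMass_fullCube_le hμ hα1 (sum_bitProd p) hcov1
  exact le_error_bound hδ hα0' hβ0 hα1 hβ1 (qErr_le_one hμ (sum_bitProd p) _) (by linarith)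

/-- **Lemma 3.4.** If the bit-wise product distribution `μ = bitProd p` is
`(α₀,β₀,α₁,β₁,a,b)`-feasible for `f` (witnessed by `u`, `w`) and `δ > 0`, `α₀ < 1`, then
there is a decision tree for `f` of depth at most `a·b` erring with probability at most
`1/4 + α₁ + β₁ + 4b(β₁+δ) + β₀/((1-α₀)δ)` under `μ`. -/
theorem feasible_implies_dtree {n : ℕ} (δ : ℝ) (hδ : 0 < δ)
    (f : (Fin n → Bool) → Bool) (p : Fin n → ℝ) (hp : ∀ i, 0 ≤ p i ∧ p i ≤ 1)
    (α0 β0 α1 β1 : ℝ) (hα0 : 0 ≤ α0) (hα0' : α0 < 1)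
    (hβ0 : 0 ≤ β0) (hα1 : 0 ≤ α1) (hβ1 : 0 ≤ β1)
    (a b : ℕ)
    (u w : Subcube n → ℝ) (hu0 : ∀ A, 0 ≤ u A) (hw0 : ∀ A, 0 ≤ w A)
    (hua : ∀ A, u A ≠ 0 → cubeSize A ≤ a)
    (hwb : ∀ A, w A ≠ 0 → cubeSize A ≤ b)
    (hufix : ∀ A, u A ≠ 0 → ∀ i, p i = 0 ∨ p i = 1 → A i = none)
    (hwfix : ∀ A, w A ≠ 0 → ∀ i, p i = 0 ∨ p i = 1 → A i = none)
    (hcov0 : ∀ x, f x = false → 1 - α0 ≤ cubeCov u x)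
    (hpack0 : ∀ x, f x = true → cubeCov u x ≤ β0)
    (hcov1 : (1 - α1) * qTotalZ (bitProd p) f true ≤
      ∑ A : Subcube n, cubeMassZ (bitProd p) f true A * w A)
    (hone1 : ∀ x, cubeCov w x ≤ 1)
    (hpack1 : ∀ x, f x = false → cubeCov w x ≤ β1) :
    ∃ T : DTree n, T.depth ≤ a * b ∧
      qErr (bitProd p) f T ≤
        1 / 4 + α1 + β1 + 4 * (b : ℝ) * (β1 + δ) + β0 / ((1 - α0) * δ) :=
  feasible_implies_dtree_general δ hδ f p hp α0 β0 α1 β1 hα0' hβ0 hα1 hβ1 a b u w hu0 hw0 hua hwb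
    hcov0 hpack0 hcov1 hone1 hpack1
end

section
/- Let f : {0,1}^n → {0,1}, let μ be a bit-wise product probability distribution on {0,1}^n, and let (u_A : A a subcube with support size at most a) be nonnegative reals satisfying Σ_{A∋x} u_A ≥ 1−α₀ for all x ∈ f^{-1}(0) and Σ_{A∋x} u_A ≤ β₀ for all x ∈ f^{-1}(1). Suppose δ > 0 is such that (1−α₀)·μ_0 − (β₀/δ)·μ_1 > 0. Then there exists a subcube A with support of size at most a such that μ_1(A) ≤ δ·μ_0(A). -/
open scoped BigOperators
open scoped Classical

/-- **Claim 3.5 (existence of a biased subcube).** If the bit-wise product distribution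
`μ = bitProd p` together with nonnegative `u` (supported on subcubes of support size at
most `a`) satisfies the `0`-side covering/packing constraints and
`(1-α₀)·μ₀ - (β₀/δ)·μ₁ > 0`, then there is a subcube `A` with support of size at most
`a` such that `μ₁(A) ≤ δ·μ₀(A)`. -/
theorem exists_biased_subcube {n : ℕ} (f : (Fin n → Bool) → Bool)
    (p : Fin n → ℝ) (hp : ∀ i, 0 ≤ p i ∧ p i ≤ 1)
    (a : ℕ) (α0 β0 δ : ℝ) (hδ : 0 < δ)
    (u : Subcube n → ℝ) (hu0 : ∀ A, 0 ≤ u A)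
    (hua : ∀ A, u A ≠ 0 → cubeSize A ≤ a)
    (hcov : ∀ x, f x = false → 1 - α0 ≤ cubeCov u x)
    (hpack : ∀ x, f x = true → cubeCov u x ≤ β0)
    (hpos : 0 < (1 - α0) * qTotalZ (bitProd p) f false -
      (β0 / δ) * qTotalZ (bitProd p) f true) :
    ∃ A : Subcube n, cubeSize A ≤ a ∧
      cubeMassZ (bitProd p) f true A ≤ δ * cubeMassZ (bitProd p) f false A := by
  classical
  set μ := bitProd p with hμdef
  have hμ : ∀ x, 0 ≤ μ x := by
    intro x
    apply Finset.prod_nonneg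
    intro i _
    by_cases h : x i <;> simp [h, (hp i).1, sub_nonneg.2 (hp i).2]
  -- swap lemma
  have swap : ∀ z : Bool, ∑ A : Subcube n, u A * cubeMassZ μ f z A
      = ∑ x, if f x = z then μ x * cubeCov u x else 0 := by
    intro z
    simp only [cubeMassZ, Finset.mul_sum]
    rw [Finset.sum_comm]
    refine Finset.sum_congr rfl fun x _ => ?_
    by_cases hz : f x = z
    · simp only [hz, and_true, cubeCov, Finset.mul_sum, if_true]
      refine Finset.sum_congr rfl fun A _ => ?_
      by_cases hm : memCube A x <;> simp [hm, mul_comm]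
    · simp [hz]
  have S0 : (1 - α0) * qTotalZ μ f false ≤ ∑ A : Subcube n, u A * cubeMassZ μ f false A := by
    rw [swap false, qTotalZ, Finset.mul_sum]
    refine Finset.sum_le_sum fun x _ => ?_
    by_cases hz : f x = false
    · simp only [hz, if_true]
      rw [mul_comm (μ x)]
      exact mul_le_mul_of_nonneg_right (hcov x hz) (hμ x)
    · simp [hz]
  have S1 : ∑ A : Subcube n, u A * cubeMassZ μ f true A ≤ β0 * qTotalZ μ f true := by
    rw [swap true, qTotalZ, Finset.mul_sum]
    refine Finset.sum_le_sum fun x _ => ?_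
    by_cases hz : f x = true
    · simp only [hz, if_true]
      rw [mul_comm β0]
      exact mul_le_mul_of_nonneg_left (hpack x hz) (hμ x)
    · simp [hz]
  have key : 0 < ∑ A : Subcube n, u A * (δ * cubeMassZ μ f false A - cubeMassZ μ f true A) := by
    have : ∑ A : Subcube n, u A * (δ * cubeMassZ μ f false A - cubeMassZ μ f true A)
        = δ * (∑ A : Subcube n, u A * cubeMassZ μ f false A)
          - ∑ A : Subcube n, u A * cubeMassZ μ f true A := by
      rw [Finset.mul_sum, ← Finset.sum_sub_distrib]
      refine Finset.sum_congr rfl fun A _ => by ring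
    rw [this]
    have h1 : δ * ((1 - α0) * qTotalZ μ f false) ≤
        δ * ∑ A : Subcube n, u A * cubeMassZ μ f false A :=
      mul_le_mul_of_nonneg_left S0 hδ.le
    have h2 : 0 < δ * ((1 - α0) * qTotalZ μ f false) - β0 * qTotalZ μ f true := by
      have := mul_pos hδ hpos
      have hβ : δ * ((β0 / δ) * qTotalZ μ f true) = β0 * qTotalZ μ f true := by
        field_simp
      nlinarith [this]
    linarith
  have hex : ∃ A : Subcube n,
      0 < u A * (δ * cubeMassZ μ f false A - cubeMassZ μ f true A) := by
    by_contra h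
    push_neg at h
    have : ∑ A : Subcube n, u A * (δ * cubeMassZ μ f false A - cubeMassZ μ f true A) ≤ 0 :=
      Finset.sum_nonpos fun A _ => h A
    linarith
  obtain ⟨A, hA⟩ := hex
  have huA : u A ≠ 0 := by
    intro h; rw [h] at hA; simp at hA
  refine ⟨A, hua A huA, ?_⟩
  have huApos : 0 < u A := lt_of_le_of_ne (hu0 A) (Ne.symm huA)
  nlinarith [hA]
end
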